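/- arXiv:2001.11060 — 11 statements merged into one kernel-verified Lean document; each statement's English description precedes it below -/
import Mathlib

section
/- Let A be an implicative semilattice, j a nucleus on A, and B a finite subset of A containing ⊤ and closed under ⊓ and ⇨. For b ∈ B define j_B(b) to be the infimum (a finite meet, which lies in B) of the set {x ∈ B | j x = x and b ≤ x} (nonempty since ⊤ belongs to it). Then: (i) b ≤ j_B(b) for all b ∈ B; (ii) j_B(j_B(b)) = j_B(b) for all b ∈ B; (iii) j_B(b ⊓ b') = j_B(b) ⊓ j_B(b') for all b, b' ∈ B; (iv) j b ≤ j_B(b) for all b ∈ B; and (v) if j b ∈ B then j_B(b) = j b. -/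
/-! The elements of `B` fixed by `j` form a finite `⊓`-closed set containing `⊤`, so `j_B b` is
the least such element above `b` and `j_B` is a closure operator on `A`. Meets are preserved
because fixed points of a nucleus are closed under `b ⇨ ·` for every `b`: from
`b ⊓ b' ≤ y := j_B (b ⊓ b')` one gets `j_B b' ≤ b ⇨ y`, hence `j_B b ≤ j_B b' ⇨ y`, so that
`j_B b ⊓ j_B b' ≤ y`. -/

section

open Finset Function

variable {A : Type*} [SemilatticeInf A]

namespace ClosureOperator

theorem closure_inf_closure_le_of_himp (c : ClosureOperator A) (himp : A → A → A)
    (hres : ∀ a b c : A, a ≤ himp b c ↔ a ⊓ b ≤ c) {s : Set A}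
    (hclosed : ∀ y, c.IsClosed y → y ∈ s)
    (hhimp : ∀ a ∈ s, ∀ y, c.IsClosed y → c.IsClosed (himp a y))
    {a b : A} (ha : a ∈ s) : c a ⊓ c b ≤ c (a ⊓ b) := by
  set y := c (a ⊓ b)
  have hy : c.IsClosed y := c.isClosed_closure _
  have hcb : c b ≤ himp a y :=
    c.closure_min ((hres _ _ _).2 (inf_comm b a ▸ c.le_closure _)) (hhimp a ha y hy)
  have hca : c a ≤ himp (c b) y :=
    c.closure_min ((hres _ _ _).2 (inf_comm (c b) a ▸ (hres _ _ _).1 hcb))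
      (hhimp _ (hclosed _ (c.isClosed_closure b)) y hy)
  exact (hres _ _ _).1 hca

end ClosureOperator

namespace Nucleus

theorem infClosed_fixedPoints (n : Nucleus A) : InfClosed (fixedPoints n) :=
  fun x (hx : n x = x) y (hy : n y = y) => show n (x ⊓ y) = x ⊓ y by rw [map_inf, hx, hy]

theorem isFixedPt_himp (n : Nucleus A) (himp : A → A → A)
    (hres : ∀ a b c : A, a ≤ himp b c ↔ a ⊓ b ≤ c) (a : A) {y : A} (hy : IsFixedPt n y) :
    IsFixedPt n (himp a y) := by
  refine le_antisymm ((hres _ _ _).2 ?_) n.le_apply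
  calc n (himp a y) ⊓ a ≤ n (himp a y) ⊓ n a := inf_le_inf_left _ n.le_apply
    _ = n (himp a y ⊓ a) := n.map_inf.symm
    _ ≤ n y := n.monotone ((hres _ _ _).1 le_rfl)
    _ = y := hy

variable [OrderTop A] (n : Nucleus A) {B : Finset A} (htop : ⊤ ∈ B)
  (hinf : InfClosed (B : Set A))

open Classical in
noncomputable def finsetClosure : ClosureOperator A :=
  .ofPred (fun b => (B.filter fun x => n x = x ∧ b ≤ x).inf'
      ⟨⊤, mem_filter.2 ⟨htop, map_top n, le_top⟩⟩ id)
    (· ∈ (B : Set A) ∩ fixedPoints n)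
    (fun _ => le_inf' _ _ fun _ hx => (mem_filter.1 hx).2.2)
    (fun _ => (hinf.inter n.infClosed_fixedPoints).finsetInf'_mem _
      fun _ hx => ⟨(mem_filter.1 hx).1, (mem_filter.1 hx).2.1⟩)
    (fun _ _ hxy hy => inf'_le id (mem_filter.2 ⟨hy.1, hy.2, hxy⟩))

theorem apply_le_finsetClosure (b : A) : n b ≤ n.finsetClosure htop hinf b := by
  have hfix := ((n.finsetClosure htop hinf).isClosed_closure b).2
  exact hfix ▸ n.monotone ((n.finsetClosure htop hinf).le_closure b)

theorem finsetClosure_eq_of_apply_mem {b : A} (hb : n b ∈ B) :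
    n.finsetClosure htop hinf b = n b :=
  le_antisymm ((n.finsetClosure htop hinf).closure_min n.le_apply ⟨hb, n.idempotent b⟩)
    (n.apply_le_finsetClosure htop hinf b)

theorem finsetClosure_inf (himp : A → A → A) (hres : ∀ a b c : A, a ≤ himp b c ↔ a ⊓ b ≤ c)
    (himpB : ∀ x ∈ B, ∀ y ∈ B, himp x y ∈ B) {b b' : A} (hb : b ∈ B) :
    n.finsetClosure htop hinf (b ⊓ b') =
      n.finsetClosure htop hinf b ⊓ n.finsetClosure htop hinf b' :=
  le_antisymm (ClosureOperator.closure_inf_le _ b b')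
    ((n.finsetClosure htop hinf).closure_inf_closure_le_of_himp himp hres (fun _ hy => hy.1)
      (fun a ha _ hy => ⟨himpB a ha _ hy.1, n.isFixedPt_himp himp hres a hy.2⟩) hb)

end Nucleus

end

open Classical in
theorem nucleus_restricted_to_finite_subalgebra {A : Type*} [SemilatticeInf A] [OrderTop A]
    (himp : A → A → A) (hres : ∀ a b c : A, a ≤ himp b c ↔ a ⊓ b ≤ c)
    (j : A → A) (hj_le : ∀ a : A, a ≤ j a) (hj_idem : ∀ a : A, j (j a) = j a)
    (hj_inf : ∀ a b : A, j (a ⊓ b) = j a ⊓ j b)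
    (B : Finset A) (htop : (⊤ : A) ∈ B)
    (hinf : ∀ x ∈ B, ∀ y ∈ B, x ⊓ y ∈ B)
    (himpB : ∀ x ∈ B, ∀ y ∈ B, himp x y ∈ B)
    (jB : A → A)
    (hjB : ∀ b : A, jB b = (B.filter fun x => j x = x ∧ b ≤ x).inf'
      ⟨⊤, Finset.mem_filter.2 ⟨htop, le_antisymm le_top (hj_le ⊤), le_top⟩⟩ id) :
    (∀ b ∈ B, jB b ∈ B) ∧
    (∀ b ∈ B, b ≤ jB b) ∧
    (∀ b ∈ B, jB (jB b) = jB b) ∧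
    (∀ b ∈ B, ∀ b' ∈ B, jB (b ⊓ b') = jB b ⊓ jB b') ∧
    (∀ b ∈ B, j b ≤ jB b) ∧
    (∀ b ∈ B, j b ∈ B → jB b = j b) := by
  let n : Nucleus A := ⟨⟨j, hj_inf⟩, fun a => (hj_idem a).le, hj_le⟩
  have hB : InfClosed (B : Set A) := fun x hx y hy => hinf x hx y hy
  obtain rfl : jB = n.finsetClosure htop hB := funext hjB
  exact ⟨fun b _ => ((n.finsetClosure htop hB).isClosed_closure b).1,
    fun b _ => (n.finsetClosure htop hB).le_closure b,
    fun b _ => (n.finsetClosure htop hB).idempotent b,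
    fun _ hb _ _ => n.finsetClosure_inf htop hB himp hres himpB hb,
    fun b _ => n.apply_le_finsetClosure htop hB b,
    fun _ _ hjb => n.finsetClosure_eq_of_apply_mem htop hB hjb⟩
end

section
/- Let A be an implicative semilattice and B a finite subset of A containing ⊤ and closed under ⊓ and ⇨. Define k : A → A by k(a) = the infimum over b ∈ B of (a ⇨ b) ⇨ b (a finite meet; B is nonempty since ⊤ ∈ B). Then: (i) k is a nucleus on A; and (ii) if moreover B is a total subalgebra, i.e. a ⇨ b ∈ B for every a ∈ A and b ∈ B, then B equals the set {a ∈ A | k a = a} of fixpoints of k. -/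
/-! For each `b`, the map `a ↦ (a ⇨ b) ⇨ b` is a nucleus, and nuclei on a meet-semilattice are
closed under pointwise binary meets, so `k` is a nucleus. Every `b ∈ B` is fixed by `k` because
`k b ≤ (b ⇨ b) ⇨ b ≤ b`; conversely, if `B` is a total subalgebra then every value `k a` lies
in `B`, being a meet of elements `(a ⇨ b) ⇨ b` of `B`. -/

def IsResiduation {A : Type*} [SemilatticeInf A] (himp : A → A → A) : Prop :=
  ∀ a b c : A, a ≤ himp b c ↔ a ⊓ b ≤ c

namespace IsResiduation

variable {A : Type*} [SemilatticeInf A] {himp : A → A → A}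

theorem himp_inf_le (h : IsResiduation himp) (a b : A) : himp a b ⊓ a ≤ b :=
  (h _ _ _).mp le_rfl

theorem le_himp_himp (h : IsResiduation himp) (a b : A) : a ≤ himp (himp a b) b :=
  (h _ _ _).mpr (inf_comm a _ ▸ h.himp_inf_le a b)

theorem himp_anti (h : IsResiduation himp) {a a' : A} (ha : a ≤ a') (b : A) :
    himp a' b ≤ himp a b :=
  (h _ _ _).mpr ((inf_le_inf_left _ ha).trans (h.himp_inf_le a' b))

theorem himp_himp_self_le (h : IsResiduation himp) (a : A) : himp (himp a a) a ≤ a :=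
  calc himp (himp a a) a
      ≤ himp (himp a a) a ⊓ himp a a := le_inf le_rfl ((h _ _ _).mpr inf_le_right)
    _ ≤ a := h.himp_inf_le _ _

theorem himp_inf_le_himp_himp (h : IsResiduation himp) (a c b : A) :
    himp (a ⊓ c) b ≤ himp a (himp c b) := by
  rw [h, h, inf_assoc]
  exact h.himp_inf_le _ _

theorem himp_himp_inf_himp_himp_le (h : IsResiduation himp) (a c b : A) :
    himp (himp a b) b ⊓ himp (himp c b) b ≤ himp (himp (a ⊓ c) b) b := by
  have hc : himp (himp c b) b ⊓ himp (a ⊓ c) b ≤ himp a b := by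
    rw [h, inf_assoc]
    calc himp (himp c b) b ⊓ (himp (a ⊓ c) b ⊓ a)
        ≤ himp (himp c b) b ⊓ himp c b :=
          inf_le_inf_left _ ((inf_le_inf_right a (h.himp_inf_le_himp_himp a c b)).trans
            (h.himp_inf_le _ _))
      _ ≤ b := h.himp_inf_le _ _
  rw [h, inf_assoc]
  exact (inf_le_inf_left _ hc).trans (h.himp_inf_le _ _)

def himpHimpNucleus (h : IsResiduation himp) (b : A) : Nucleus A where
  toFun a := himp (himp a b) b
  map_inf' a c := le_antisymm
    (le_inf (h.himp_anti (h.himp_anti inf_le_left b) b)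
      (h.himp_anti (h.himp_anti inf_le_right b) b))
    (h.himp_himp_inf_himp_himp_le a c b)
  idempotent' a := h.himp_anti (h.le_himp_himp (himp a b) b) b
  le_apply' a := h.le_himp_himp a b

theorem inf'_himpHimpNucleus_apply (h : IsResiduation himp) {B : Finset A} (hB : B.Nonempty)
    (a : A) : B.inf' hB h.himpHimpNucleus a = B.inf' hB fun b => himp (himp a b) b :=
  Finset.apply_inf'_eq_inf'_comp hB (fun n : Nucleus A => n a) fun _ _ => rfl

theorem fixedPoints_inf'_himpHimpNucleus (h : IsResiduation himp) {B : Finset A}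
    (hB : B.Nonempty) (hinf : ∀ x ∈ B, ∀ y ∈ B, x ⊓ y ∈ B)
    (himpB : ∀ x ∈ B, ∀ y ∈ B, himp x y ∈ B) (htotal : ∀ a : A, ∀ b ∈ B, himp a b ∈ B) :
    Function.fixedPoints ⇑(B.inf' hB h.himpHimpNucleus) = (B : Set A) := by
  ext a
  constructor
  · intro (ha : _ = a)
    rw [h.inf'_himpHimpNucleus_apply] at ha
    rw [Finset.mem_coe, ← ha]
    exact Finset.inf'_mem (B : Set A) hinf B hB _
      fun b hb => himpB _ (htotal a b hb) _ hb
  · intro ha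
    refine le_antisymm ?_ Nucleus.le_apply
    rw [h.inf'_himpHimpNucleus_apply]
    exact (Finset.inf'_le _ ha).trans (h.himp_himp_self_le a)

end IsResiduation

theorem nucleus_induced_by_finite_subalgebra {A : Type*} [SemilatticeInf A] [OrderTop A]
    (himp : A → A → A) (hres : ∀ a b c : A, a ≤ himp b c ↔ a ⊓ b ≤ c)
    (B : Finset A) (htop : (⊤ : A) ∈ B)
    (hinf : ∀ x ∈ B, ∀ y ∈ B, x ⊓ y ∈ B)
    (himpB : ∀ x ∈ B, ∀ y ∈ B, himp x y ∈ B)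
    (k : A → A)
    (hk : ∀ a : A, k a = B.inf' ⟨⊤, htop⟩ (fun b => himp (himp a b) b)) :
    ((∀ a : A, a ≤ k a) ∧ (∀ a : A, k (k a) = k a) ∧
      (∀ a b : A, k (a ⊓ b) = k a ⊓ k b)) ∧
    ((∀ a : A, ∀ b ∈ B, himp a b ∈ B) →
      (↑B : Set A) = {a : A | k a = a}) := by
  have h : IsResiduation himp := hres
  obtain rfl : k = B.inf' ⟨⊤, htop⟩ h.himpHimpNucleus :=
    funext fun a => (hk a).trans (h.inf'_himpHimpNucleus_apply _ a).symm
  exact ⟨⟨fun _ => Nucleus.le_apply, fun _ => Nucleus.idempotent _, fun _ _ => Nucleus.map_inf⟩,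
    fun htotal => (h.fixedPoints_inf'_himpHimpNucleus _ hinf himpB htotal).symm⟩
end

section
/- Let A be a finite implicative semilattice and j a nucleus on A. If a ∈ A satisfies j a = a and x is a meet-prime component of a, i.e. x is meet-prime, a ≤ x, and x is minimal among the meet-prime elements above a (for every meet-prime m with a ≤ m and m ≤ x one has m = x), then j x = x. -/
/-!
If `x` is a minimal meet-prime above `a`, then, since `a` is the meet of the meet-primes above
it, `a = d ⊓ x` where `d` is the meet of the other such primes, and `d ≰ x` by minimality.
Then `d ⊓ j x ≤ j d ⊓ j x = j a = a ≤ x`, so `j x ≤ x` because `x` is meet-prime.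
-/

section ImplicativeSemilattice

variable {A : Type*} [SemilatticeInf A]
  (himp : A → A → A) (hres : ∀ a b c : A, a ≤ himp b c ↔ a ⊓ b ≤ c)
include hres

/-- Elements strictly above an `m` maximal with `c ≰ m` lie above `c`; applied to `b ⇨ m`. -/
theorem inf_le_of_maximal_not_le {c m w b : A} (hm : Maximal (fun y => ¬ c ≤ y) m)
    (hwb : w ⊓ b ≤ m) (hw : ¬ w ≤ m) : c ⊓ b ≤ m := by
  have hm_lt : m < himp b m :=
    lt_of_le_not_ge ((hres m b m).2 inf_le_left) fun h => hw (((hres w b m).2 hwb).trans h)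
  exact (hres c b m).1 (not_not.1 (hm.not_prop_of_gt hm_lt))

theorem infPrime_of_maximal_not_le {c m : A} (hm : Maximal (fun y => ¬ c ≤ y) m) :
    InfPrime m := by
  refine ⟨fun hmax => hm.prop ?_, fun u v huv => ?_⟩
  · have hc : c ≤ himp m m := (hres c m m).2 inf_le_right
    exact hc.trans (hmax ((hres m m m).2 inf_le_left))
  · by_contra! h
    have hcu : c ⊓ u ≤ m := inf_le_of_maximal_not_le himp hres hm (by rwa [inf_comm]) h.2
    have hcc : c ⊓ c ≤ m := inf_le_of_maximal_not_le himp hres hm (by rwa [inf_comm]) h.1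
    exact hm.prop (by rwa [inf_idem] at hcc)

theorem le_of_forall_infPrime_le [Finite A] {a b : A}
    (h : ∀ m, InfPrime m → a ≤ m → b ≤ m) : b ≤ a := by
  by_contra hba
  obtain ⟨m, ham, hm⟩ := Finite.exists_le_maximal (p := fun y => ¬ b ≤ y) hba
  exact hm.prop (h m (infPrime_of_maximal_not_le himp hres hm) ham)

theorem exists_inf_eq_not_le_of_minimal_infPrime [OrderTop A] [Finite A] {a x : A}
    (hx_prime : InfPrime x) (hax : a ≤ x)
    (hx_min : ∀ m : A, InfPrime m → a ≤ m → m ≤ x → m = x) :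
    ∃ d, d ⊓ x = a ∧ ¬ d ≤ x := by
  classical
  have : Fintype A := Fintype.ofFinite A
  let S : Finset A := {q | InfPrime q ∧ a ≤ q ∧ q ≠ x}
  refine ⟨S.inf id, le_antisymm ?_ ?_, fun hle => ?_⟩
  · refine le_of_forall_infPrime_le himp hres fun m hm ham => ?_
    rcases eq_or_ne m x with rfl | hne
    · exact inf_le_right
    · exact inf_le_left.trans (Finset.inf_le (by simp [S, hm, ham, hne]))
  · exact le_inf (Finset.le_inf fun q hq => (Finset.mem_filter.1 hq).2.2.1) hax
  · obtain ⟨q, hq, hqx⟩ := hx_prime.finset_inf_le.1 hle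
    obtain ⟨-, hq_prime, haq, hne⟩ := Finset.mem_filter.1 hq
    exact hne (hx_min q hq_prime haq hqx)

end ImplicativeSemilattice

theorem meetPrime_component_of_fixpoint_is_fixpoint_general {A : Type*} [SemilatticeInf A]
    [OrderTop A] [Finite A]
    (himp : A → A → A) (hres : ∀ a b c : A, a ≤ himp b c ↔ a ⊓ b ≤ c)
    (j : A → A) (hj_le : ∀ a : A, a ≤ j a)
    (hj_inf : ∀ a b : A, j (a ⊓ b) = j a ⊓ j b)
    (a x : A) (ha : j a = a)
    (hx_prime : InfPrime x) (hax : a ≤ x)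
    (hx_min : ∀ m : A, InfPrime m → a ≤ m → m ≤ x → m = x) :
    j x = x := by
  obtain ⟨d, hdx_eq, hdx⟩ :=
    exists_inf_eq_not_le_of_minimal_infPrime himp hres hx_prime hax hx_min
  have key : d ⊓ j x ≤ x :=
    calc d ⊓ j x ≤ j d ⊓ j x := inf_le_inf_right _ (hj_le d)
      _ = j (d ⊓ x) := (hj_inf d x).symm
      _ = a := by rw [hdx_eq, ha]
      _ ≤ x := hax
  exact le_antisymm ((hx_prime.2 key).resolve_left hdx) (hj_le x)

/-- In a finite implicative semilattice with a nucleus `j`, meet-prime components of a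
fixpoint of `j` are themselves fixpoints of `j`. -/
theorem meetPrime_component_of_fixpoint_is_fixpoint {A : Type*} [SemilatticeInf A]
    [OrderTop A] [Finite A]
    (himp : A → A → A) (hres : ∀ a b c : A, a ≤ himp b c ↔ a ⊓ b ≤ c)
    (j : A → A) (hj_le : ∀ a : A, a ≤ j a) (hj_idem : ∀ a : A, j (j a) = j a)
    (hj_inf : ∀ a b : A, j (a ⊓ b) = j a ⊓ j b)
    (a x : A) (ha : j a = a)
    (hx_prime : InfPrime x) (hax : a ≤ x)
    (hx_min : ∀ m : A, InfPrime m → a ≤ m → m ≤ x → m = x) :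
    j x = x :=
  meetPrime_component_of_fixpoint_is_fixpoint_general himp hres j hj_le hj_inf a x ha hx_prime hax
    hx_min
end

section
/- Let A be a finite implicative semilattice, j a nucleus on A, a ∈ A, and x a meet-prime element of A. Then j a ≤ x if and only if there exists a meet-prime element y of A with j y = y, a ≤ y, and y ≤ x. -/
/-!
Take `y` maximal with `j y ≤ x` above `a` (finiteness). Maximality forces `j y = y`. The set
`{b | j b ≤ x}` is a lower set which is prime because `j` preserves meets and `x` is meet-prime,
and in an implicative semilattice a maximal element of such a set is meet-prime: if `b ⊓ c ≤ y`
then `p = c ⇨ y` and `q = p ⇨ y` lie above `y` with `p ⊓ q ≤ y`, so one of them falls back to `y`,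
giving `b ≤ p ≤ y` or `c ≤ q ≤ y`.
-/

section

variable {A : Type*} [SemilatticeInf A]

theorem infPrime_of_maximal_mem [OrderTop A] (himp : A → A → A)
    (hres : ∀ a b c : A, a ≤ himp b c ↔ a ⊓ b ≤ c) {I : Set A} (hI : IsLowerSet I)
    (hI_prime : ∀ ⦃b c : A⦄, b ⊓ c ∈ I → b ∈ I ∨ c ∈ I) (htop : ⊤ ∉ I) {y : A}
    (hy : Maximal (· ∈ I) y) : InfPrime y := by
  refine ⟨fun hmax => htop (isMax_iff_eq_top.1 hmax ▸ hy.prop), fun b c hbc => ?_⟩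
  set p := himp c y
  set q := himp p y
  have hyp : y ≤ p := (hres y c y).2 inf_le_left
  have hyq : y ≤ q := (hres y p y).2 inf_le_left
  have hpq : p ⊓ q ≤ y := by rw [inf_comm]; exact (hres q p y).1 le_rfl
  rcases hI_prime (hI hpq hy.prop) with hp | hq
  · exact .inl <| ((hres b c y).2 hbc).trans (hy.le_of_ge hp hyp)
  · have hcq : c ≤ q := (hres c p y).2 <| by rw [inf_comm]; exact (hres p c y).1 le_rfl
    exact .inr <| hcq.trans (hy.le_of_ge hq hyq)

namespace Nucleus

theorem isLowerSet_setOf_apply_le (n : Nucleus A) (x : A) : IsLowerSet {b | n b ≤ x} :=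
  fun _ _ hcb hb => (n.monotone hcb).trans hb

theorem apply_le_or_apply_le_of_apply_inf_le (n : Nucleus A) {x b c : A} (hx : InfPrime x)
    (h : n (b ⊓ c) ≤ x) : n b ≤ x ∨ n c ≤ x :=
  hx.2 (n.map_inf ▸ h)

theorem not_apply_top_le [OrderTop A] (n : Nucleus A) {x : A} (hx : InfPrime x) : ¬n ⊤ ≤ x :=
  fun h => hx.ne_top (top_le_iff.1 (n.le_apply.trans h))

theorem exists_infPrime_fixed_of_apply_le [OrderTop A] [Finite A] (himp : A → A → A)
    (hres : ∀ a b c : A, a ≤ himp b c ↔ a ⊓ b ≤ c) (n : Nucleus A) {a x : A} (hx : InfPrime x)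
    (h : n a ≤ x) : ∃ y, InfPrime y ∧ n y = y ∧ a ≤ y ∧ y ≤ x := by
  obtain ⟨y, hay, hy⟩ := Finite.exists_le_maximal (p := fun b => n b ≤ x) h
  have hny : n y = y := hy.eq_of_ge (by rw [n.idempotent]; exact hy.prop) n.le_apply
  have hyprime : InfPrime y :=
    infPrime_of_maximal_mem himp hres (n.isLowerSet_setOf_apply_le x)
      (fun _ _ hbc => n.apply_le_or_apply_le_of_apply_inf_le hx hbc) (n.not_apply_top_le hx) hy
  exact ⟨y, hyprime, hny, hay, n.le_apply.trans hy.prop⟩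

theorem apply_le_iff_exists_infPrime_fixed [OrderTop A] [Finite A] (himp : A → A → A)
    (hres : ∀ a b c : A, a ≤ himp b c ↔ a ⊓ b ≤ c) (n : Nucleus A) {a x : A} (hx : InfPrime x) :
    n a ≤ x ↔ ∃ y, InfPrime y ∧ n y = y ∧ a ≤ y ∧ y ≤ x :=
  ⟨n.exists_infPrime_fixed_of_apply_le himp hres hx,
    fun ⟨_, _, hny, hay, hyx⟩ => (n.monotone hay).trans (hny.le.trans hyx)⟩

end Nucleus

end

/-- In a finite implicative semilattice with a nucleus `j`, for a meet-prime `x` we have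
`j a ≤ x` iff there is a meet-prime fixpoint `y` of `j` with `a ≤ y ≤ x`. -/
theorem j_le_meetPrime_iff {A : Type*} [SemilatticeInf A] [OrderTop A] [Finite A]
    (himp : A → A → A) (hres : ∀ a b c : A, a ≤ himp b c ↔ a ⊓ b ≤ c)
    (j : A → A) (hj_le : ∀ a : A, a ≤ j a) (hj_idem : ∀ a : A, j (j a) = j a)
    (hj_inf : ∀ a b : A, j (a ⊓ b) = j a ⊓ j b)
    (a x : A) (hx : InfPrime x) :
    j a ≤ x ↔ ∃ y : A, InfPrime y ∧ j y = y ∧ a ≤ y ∧ y ≤ x :=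
  let n : Nucleus A := ⟨⟨j, hj_inf⟩, fun a => (hj_idem a).le, hj_le⟩
  n.apply_le_iff_exists_infPrime_fixed himp hres hx
end

section
/- Let X be a poset, S ⊆ X, and x ∈ X. The complement of the principal downset ↓x is an upward-closed set, and j_S((↓x)ᶜ) = (↓x)ᶜ if and only if x ∈ S, where j_S U = {z | ∀ y, z ≤ y → y ∈ S → y ∈ U}. -/
open Set

section

variable {X : Type*}

/-- `j_S U`. -/
def nucleusOf [LE X] (S U : Set X) : Set X :=
  {z | ∀ y, z ≤ y → y ∈ S → y ∈ U}

theorem IsUpperSet.subset_nucleusOf [LE X] {U : Set X} (hU : IsUpperSet U) (S : Set X) :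
    U ⊆ nucleusOf S U :=
  fun _ hz _ hzy _ => hU hzy hz

theorem nucleusOf_compl_Iic_subset_iff [PartialOrder X] (S : Set X) (x : X) :
    nucleusOf S (Iic x)ᶜ ⊆ (Iic x)ᶜ ↔ x ∈ S := by
  constructor
  · intro hsub
    by_contra hxS
    -- the only point of `S` above `x` that could lie in `Iic x` is `x` itself
    have hx : x ∈ nucleusOf S (Iic x)ᶜ := fun y hxy hyS hyx =>
      hxS (le_antisymm hxy hyx ▸ hyS)
    exact hsub hx le_rfl
  · intro hxS z hz hzx
    exact hz x hzx hxS le_rfl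

end

/-- For a poset `X`, `S ⊆ X`, and `x ∈ X`: the complement of the principal downset `↓x`
is upward-closed, and it is a fixpoint of `j_S` iff `x ∈ S`. -/
theorem compl_principal_downset_fixpoint_iff {X : Type*} [PartialOrder X]
    (S : Set X) (x : X) :
    IsUpperSet ({y : X | y ≤ x}ᶜ) ∧
    (({z : X | ∀ y : X, z ≤ y → y ∈ S → y ∈ ({y : X | y ≤ x}ᶜ : Set X)} =
        ({y : X | y ≤ x}ᶜ : Set X)) ↔ x ∈ S) := by
  have hupper : IsUpperSet (Iic x)ᶜ := (isLowerSet_Iic x).compl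
  refine ⟨hupper, ?_⟩
  change nucleusOf S (Iic x)ᶜ = (Iic x)ᶜ ↔ x ∈ S
  rw [Subset.antisymm_iff, and_iff_left (hupper.subset_nucleusOf S)]
  exact nucleusOf_compl_Iic_subset_iff S x
end

section
/- Let X and Y be finite posets, S ⊆ X, T ⊆ Y, and let f be a Köhler morphism from X to Y with domain D ⊆ X. Then f* commutes with the nuclei, i.e. f*(j_T V) = j_S(f* V) for every upward-closed V ⊆ Y, if and only if for every x ∈ X one has ↑( f(↑x) ∩ T ) = f( ↑(↑x ∩ S) ), where f(A) denotes the image f '' (A ∩ D), ↑A = {z | ∃ a ∈ A, a ≤ z}, and ↑x = {z | x ≤ z}. -/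
/-! Both sides of `f* ∘ j_T = j_S ∘ f*`, evaluated at `x`, are tested by upper sets: `x` lies in
`f*(j_T V)` iff `↑(f(↑x) ∩ T) ⊆ V`, and in `j_S(f* V)` iff `f(↑(↑x ∩ S)) ⊆ V`. The lifting
property of `f` makes both of these sets upper sets, and two upper sets contained in the same
upper sets are equal. -/

open Set

namespace Kohler

variable {X Y : Type*} [Preorder X]

/-- The dual map `f*` of a partial map `f` with domain `D`. -/
def pullback (D : Set X) (f : X → Y) (V : Set Y) : Set X :=
  {x | ∀ z ∈ D, x ≤ z → f z ∈ V}

/-- The nucleus `j_R`. -/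
def nucleus (R U : Set X) : Set X :=
  {x | ∀ y, x ≤ y → y ∈ R → y ∈ U}

/-- Condition (ii) of a Köhler morphism, with `<` weakened to `≤`. -/
def HasUpLifts [Preorder Y] (D : Set X) (f : X → Y) : Prop :=
  ∀ x ∈ D, ∀ y, f x ≤ y → ∃ z ∈ D, x ≤ z ∧ f z = y

theorem hasUpLifts_of_lt [PartialOrder Y] {D : Set X} {f : X → Y}
    (h : ∀ x ∈ D, ∀ y, f x < y → ∃ z ∈ D, x < z ∧ f z = y) : HasUpLifts D f := by
  intro x hx y hxy
  rcases hxy.eq_or_lt with rfl | hlt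
  · exact ⟨x, hx, le_rfl, rfl⟩
  · obtain ⟨z, hz, hxz, rfl⟩ := h x hx y hlt
    exact ⟨z, hz, hxz.le, rfl⟩

variable {D : Set X} {f : X → Y}

theorem HasUpLifts.isUpperSet_image [Preorder Y] (hf : HasUpLifts D f) {U : Set X}
    (hU : IsUpperSet U) : IsUpperSet (f '' (U ∩ D)) := by
  rintro _ y hxy ⟨x, ⟨hxU, hxD⟩, rfl⟩
  obtain ⟨z, hzD, hxz, rfl⟩ := hf x hxD y hxy
  exact ⟨z, ⟨hU hxz hxU, hzD⟩, rfl⟩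

theorem HasUpLifts.mem_pullback_nucleus_iff [Preorder Y] (hf : HasUpLifts D f) (T : Set Y)
    {V : Set Y} (hV : IsUpperSet V) (x : X) :
    x ∈ pullback D f (nucleus T V) ↔ ↑(upperClosure (f '' (Ici x ∩ D) ∩ T)) ⊆ V := by
  constructor
  · rintro hx w ⟨_, ⟨⟨z, ⟨hxz, hzD⟩, rfl⟩, hzT⟩, hzw⟩
    exact hV hzw (hx z hzD hxz (f z) le_rfl hzT)
  · intro hx z hzD hxz w hzw hwT
    obtain ⟨z', hz'D, hzz', rfl⟩ := hf z hzD w hzw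
    exact hx ⟨f z', ⟨⟨z', ⟨hxz.trans hzz', hz'D⟩, rfl⟩, hwT⟩, le_rfl⟩

theorem mem_nucleus_pullback_iff (S : Set X) (V : Set Y) (x : X) :
    x ∈ nucleus S (pullback D f V) ↔ f '' (↑(upperClosure (Ici x ∩ S)) ∩ D) ⊆ V := by
  constructor
  · rintro hx _ ⟨z, ⟨⟨y, ⟨hxy, hyS⟩, hyz⟩, hzD⟩, rfl⟩
    exact hx y hxy hyS z hzD hyz
  · intro hx y hxy hyS z hzD hyz
    exact hx ⟨z, ⟨⟨y, ⟨hxy, hyS⟩, hyz⟩, hzD⟩, rfl⟩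

end Kohler

theorem Set.eq_of_forall_isUpperSet_subset_iff {α : Type*} [Preorder α] {A B : Set α}
    (hA : IsUpperSet A) (hB : IsUpperSet B) (h : ∀ V, IsUpperSet V → (A ⊆ V ↔ B ⊆ V)) :
    A = B :=
  Subset.antisymm ((h B hB).2 subset_rfl) ((h A hA).1 subset_rfl)

open Kohler in
theorem fstar_nuclear_iff_general {X Y : Type*} [PartialOrder X] [PartialOrder Y]
    (S : Set X) (T : Set Y) (D : Set X) (f : X → Y)
    (hlift : ∀ x ∈ D, ∀ y : Y, f x < y → ∃ z ∈ D, x < z ∧ f z = y) :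
    (∀ V : Set Y, IsUpperSet V →
        {x : X | ∀ z ∈ D, x ≤ z → f z ∈ {v : Y | ∀ w : Y, v ≤ w → w ∈ T → w ∈ V}} =
        {x : X | ∀ y : X, x ≤ y → y ∈ S →
          y ∈ {x : X | ∀ z ∈ D, x ≤ z → f z ∈ V}}) ↔
      (∀ x : X,
        {w : Y | ∃ v ∈ (f '' ({z : X | x ≤ z} ∩ D)) ∩ T, v ≤ w} =
        f '' ({w : X | ∃ v ∈ {z : X | x ≤ z} ∩ S, v ≤ w} ∩ D)) := by
  have hf : HasUpLifts D f := hasUpLifts_of_lt hlift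
  change (∀ V, IsUpperSet V → pullback D f (nucleus T V) = nucleus S (pullback D f V)) ↔
    ∀ x, ↑(upperClosure (f '' (Ici x ∩ D) ∩ T)) = f '' (↑(upperClosure (Ici x ∩ S)) ∩ D)
  constructor
  · intro H x
    refine eq_of_forall_isUpperSet_subset_iff (UpperSet.upper _)
      (hf.isUpperSet_image (UpperSet.upper _)) fun V hV => ?_
    rw [← hf.mem_pullback_nucleus_iff T hV, ← mem_nucleus_pullback_iff, Set.ext_iff.1 (H V hV) x]
  · intro H V hV
    ext x
    rw [hf.mem_pullback_nucleus_iff T hV, mem_nucleus_pullback_iff, H x]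

/-- For a Köhler morphism `f` between finite S-posets `(X,S)` and `(Y,T)` with domain `D`,
the dual map `f*` commutes with the nuclei `j_T` and `j_S` iff
`↑(f(↑x) ∩ T) = f(↑(↑x ∩ S))` for all `x ∈ X`. -/
theorem fstar_nuclear_iff {X Y : Type*} [PartialOrder X] [PartialOrder Y]
    [Finite X] [Finite Y]
    (S : Set X) (T : Set Y) (D : Set X) (f : X → Y)
    (hmono : ∀ x ∈ D, ∀ x' ∈ D, x < x' → f x < f x')
    (hlift : ∀ x ∈ D, ∀ y : Y, f x < y → ∃ z ∈ D, x < z ∧ f z = y) :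
    (∀ V : Set Y, IsUpperSet V →
        {x : X | ∀ z ∈ D, x ≤ z → f z ∈ {v : Y | ∀ w : Y, v ≤ w → w ∈ T → w ∈ V}} =
        {x : X | ∀ y : X, x ≤ y → y ∈ S →
          y ∈ {x : X | ∀ z ∈ D, x ≤ z → f z ∈ V}}) ↔
      (∀ x : X,
        {w : Y | ∃ v ∈ (f '' ({z : X | x ≤ z} ∩ D)) ∩ T, v ≤ w} =
        f '' ({w : X | ∃ v ∈ {z : X | x ≤ z} ∩ S, v ≤ w} ∩ D)) :=
  fstar_nuclear_iff_general S T D f hlift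
end

section
/- Let X and Y be finite posets, S ⊆ X, T ⊆ Y, and let f be a Köhler morphism from X to Y with domain D ⊆ X. Then the condition '↑( f(↑x) ∩ T ) = f( ↑(↑x ∩ S) ) for all x ∈ X' (with f(A) = f '' (A ∩ D)) holds if and only if both: (1) {x ∈ D | f x ∈ T} = D ∩ S; and (2) whenever s ∈ S, d ∈ D, and s ≤ d, there exist s' ∈ S ∩ D and d' ∈ D with s ≤ s' ≤ d' and f d = f d'. -/
/-!
Write `P = {x ∈ D | f x ∈ T}`. The lifting property makes `f` commute with upward closure on
subsets of `D`, so `↑(f(↑x) ∩ T) = f(↑(↑x ∩ P))`, and the condition compares `f(↑(↑x ∩ P))` with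
`f(↑(↑x ∩ S))`. Strict monotonicity makes `f` injective along chains in `D`, so `f x` for `x ∈ D`
lies in `f(↑(↑x ∩ R))` exactly when `x ∈ R`; this forces `P = D ∩ S`, after which the equality is
condition (2).
-/

open Set

section KoehlerMorphism

variable {X Y : Type*} [PartialOrder X] [PartialOrder Y] {D : Set X} {f : X → Y}

theorem StrictMonoOn.eq_of_le_of_apply_le (hf : StrictMonoOn f D) {a b : X} (ha : a ∈ D)
    (hb : b ∈ D) (hab : a ≤ b) (hba : f b ≤ f a) : a = b := by
  by_contra hne
  exact (hf ha hb (hab.lt_of_ne hne)).not_ge hba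

theorem upperClosure_image_eq_image_upperClosure (hmono : MonotoneOn f D)
    (hlift : ∀ x ∈ D, ∀ y : Y, f x < y → ∃ z ∈ D, x < z ∧ f z = y) {B : Set X} (hB : B ⊆ D) :
    (upperClosure (f '' B) : Set Y) = f '' (upperClosure B ∩ D) := by
  ext y
  simp only [SetLike.mem_coe, mem_upperClosure, mem_image, mem_inter_iff]
  constructor
  · rintro ⟨_, ⟨b, hbB, rfl⟩, hby⟩
    obtain hlt | rfl := hby.lt_or_eq
    · obtain ⟨z, hzD, hbz, rfl⟩ := hlift b (hB hbB) y hlt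
      exact ⟨z, ⟨⟨b, hbB, hbz.le⟩, hzD⟩, rfl⟩
    · exact ⟨b, ⟨⟨b, hbB, le_rfl⟩, hB hbB⟩, rfl⟩
  · rintro ⟨z, ⟨⟨b, hbB, hbz⟩, hzD⟩, rfl⟩
    exact ⟨f b, ⟨b, hbB, rfl⟩, hmono (hB hbB) hzD hbz⟩

theorem StrictMonoOn.apply_mem_image_upperClosure_iff (hf : StrictMonoOn f D) {x : X}
    (hx : x ∈ D) (R : Set X) :
    f x ∈ f '' (upperClosure (Ici x ∩ R) ∩ D) ↔ x ∈ R := by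
  constructor
  · rintro ⟨w, ⟨hw, hwD⟩, hfw⟩
    obtain ⟨r, ⟨hxr, hrR⟩, hrw⟩ := mem_upperClosure.1 hw
    obtain rfl := hf.eq_of_le_of_apply_le hx hwD (hxr.trans hrw) hfw.le
    rwa [le_antisymm hrw hxr] at hrR
  · intro hxR
    exact ⟨x, ⟨mem_upperClosure.2 ⟨x, ⟨le_rfl, hxR⟩, le_rfl⟩, hx⟩, rfl⟩

theorem StrictMonoOn.image_upperClosure_eq_iff (hf : StrictMonoOn f D) {P S : Set X}
    (hP : P ⊆ D) :
    (∀ x : X, f '' (upperClosure (Ici x ∩ P) ∩ D) = f '' (upperClosure (Ici x ∩ S) ∩ D)) ↔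
      (P = D ∩ S ∧ ∀ s ∈ S, ∀ d ∈ D, s ≤ d →
        ∃ s' ∈ S ∩ D, ∃ d' ∈ D, s ≤ s' ∧ s' ≤ d' ∧ f d = f d') := by
  constructor
  · intro hPS
    have hPeq : P = D ∩ S := by
      ext x
      refine ⟨fun hxP => ⟨hP hxP, ?_⟩, fun ⟨hxD, hxS⟩ => ?_⟩
      · rw [← hf.apply_mem_image_upperClosure_iff (hP hxP), ← hPS,
          hf.apply_mem_image_upperClosure_iff (hP hxP)]
        exact hxP
      · rw [← hf.apply_mem_image_upperClosure_iff hxD, hPS,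
          hf.apply_mem_image_upperClosure_iff hxD]
        exact hxS
    refine ⟨hPeq, fun s hsS d hdD hsd => ?_⟩
    have hfd : f d ∈ f '' (upperClosure (Ici s ∩ S) ∩ D) :=
      ⟨d, ⟨mem_upperClosure.2 ⟨s, ⟨le_rfl, hsS⟩, hsd⟩, hdD⟩, rfl⟩
    rw [← hPS, hPeq] at hfd
    obtain ⟨d', ⟨hd', hd'D⟩, hfd'⟩ := hfd
    obtain ⟨s', ⟨hss', hs'D, hs'S⟩, hs'd'⟩ := mem_upperClosure.1 hd'
    exact ⟨s', ⟨hs'S, hs'D⟩, d', hd'D, hss', hs'd', hfd'.symm⟩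
  · rintro ⟨rfl, hlift⟩ x
    refine (image_mono (inter_subset_inter_left _ ?_)).antisymm ?_
    · exact UpperSet.coe_subset_coe.2 (upperClosure_anti (inter_subset_inter_right _ inter_subset_right))
    · rintro _ ⟨d, ⟨hd, hdD⟩, rfl⟩
      obtain ⟨s, ⟨hxs, hsS⟩, hsd⟩ := mem_upperClosure.1 hd
      obtain ⟨s', ⟨hs'S, hs'D⟩, d', hd'D, hss', hs'd', hfd⟩ := hlift s hsS d hdD hsd
      exact ⟨d', ⟨mem_upperClosure.2 ⟨s', ⟨hxs.trans hss', hs'D, hs'S⟩, hs'd'⟩, hd'D⟩, hfd.symm⟩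

end KoehlerMorphism

theorem S_morphism_characterization_general {X Y : Type*} [PartialOrder X] [PartialOrder Y]
    (S : Set X) (T : Set Y) (D : Set X) (f : X → Y)
    (hmono : ∀ x ∈ D, ∀ x' ∈ D, x < x' → f x < f x')
    (hlift : ∀ x ∈ D, ∀ y : Y, f x < y → ∃ z ∈ D, x < z ∧ f z = y) :
    (∀ x : X,
        {w : Y | ∃ v ∈ (f '' ({z : X | x ≤ z} ∩ D)) ∩ T, v ≤ w} =
        f '' ({w : X | ∃ v ∈ {z : X | x ≤ z} ∩ S, v ≤ w} ∩ D)) ↔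
      ({x : X | x ∈ D ∧ f x ∈ T} = D ∩ S ∧
        ∀ s ∈ S, ∀ d ∈ D, s ≤ d →
          ∃ s' ∈ S ∩ D, ∃ d' ∈ D, s ≤ s' ∧ s' ≤ d' ∧ f d = f d') := by
  have hstrict : StrictMonoOn f D := hmono
  have hleft (x : X) : {w : Y | ∃ v ∈ (f '' ({z : X | x ≤ z} ∩ D)) ∩ T, v ≤ w} =
      f '' (upperClosure (Ici x ∩ (D ∩ f ⁻¹' T)) ∩ D) := by
    rw [← image_inter_preimage, ← inter_assoc]
    exact upperClosure_image_eq_image_upperClosure hstrict.monotoneOn hlift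
      (inter_subset_left.trans inter_subset_right)
  simp only [hleft]
  exact hstrict.image_upperClosure_eq_iff inter_subset_left

/-- For a Köhler morphism `f` between finite S-posets `(X,S)` and `(Y,T)` with domain `D`,
the condition `↑(f(↑x) ∩ T) = f(↑(↑x ∩ S))` for all `x ∈ X` holds iff
(1) `f⁻¹(T) = D ∩ S` and (2) whenever `s ∈ S`, `d ∈ D`, `s ≤ d`, there are
`s' ∈ S ∩ D` and `d' ∈ D` with `s ≤ s' ≤ d'` and `f d = f d'`. -/
theorem S_morphism_characterization {X Y : Type*} [PartialOrder X] [PartialOrder Y]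
    [Finite X] [Finite Y]
    (S : Set X) (T : Set Y) (D : Set X) (f : X → Y)
    (hmono : ∀ x ∈ D, ∀ x' ∈ D, x < x' → f x < f x')
    (hlift : ∀ x ∈ D, ∀ y : Y, f x < y → ∃ z ∈ D, x < z ∧ f z = y) :
    (∀ x : X,
        {w : Y | ∃ v ∈ (f '' ({z : X | x ≤ z} ∩ D)) ∩ T, v ≤ w} =
        f '' ({w : X | ∃ v ∈ {z : X | x ≤ z} ∩ S, v ≤ w} ∩ D)) ↔
      ({x : X | x ∈ D ∧ f x ∈ T} = D ∩ S ∧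
        ∀ s ∈ S, ∀ d ∈ D, s ≤ d →
          ∃ s' ∈ S ∩ D, ∃ d' ∈ D, s ≤ s' ∧ s' ≤ d' ∧ f d = f d') :=
  S_morphism_characterization_general S T D f hmono hlift
end

section
/- Coloring Theorem for nuclear implicative semilattices: let X be a finite poset, S ⊆ X, and U_1, …, U_n upward-closed subsets of X with coloring c(x) = {i | x ∈ U_i}. Then the family of all upward-closed subsets of X is generated by U_1, …, U_n under intersection, the whole set, the Heyting implication U ⇨ V = {x | ∀ y, x ≤ y → y ∈ U → y ∈ V}, and the nucleus j_S U = {x | ∀ y, x ≤ y → y ∈ S → y ∈ U} — i.e. the smallest family of upward-closed sets containing U_1,…,U_n and X and closed under these operations is the family of all upward-closed sets — if and only if: (1) for every x ∈ X, if c(x) = c(∇x) then x ∈ S and ∇x ⊄ S; and (2) for all x, y ∈ X, if ∇x = ∇y, c(x) = c(y), and (x ∈ S ↔ y ∈ S), then x = y. -/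
/-!
Necessity. If `x` violates (1), the sets `V` with `x ∈ V ↔ ∇x ⊆ V` form a family closed under the
operations that contains every `U i` but not `Ioi x`. If `x ≠ y` violate (2), the sets containing
both or neither of `x`, `y` form such a family, and it misses `Ici x` or `Ici y`.

Sufficiency. Every upset is an intersection of sets `(Iic q)ᶜ = Ici q ⇨ Ioi q`, so it suffices to
generate `Ioi z` and `Ici z`; this is done by well-founded induction on `Ioi z` under inclusion.
Each of the two is the least generated set containing `Ioi z`, resp. `z`. A maximal point `a`
outside it either has `Ioi a ⊂ Ioi z`, and is then cut off by `(Iic a)ᶜ`, or has the same covers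
as `z`, and then (1) or (2) provides a generated set separating `a` from `z`.
-/

section

open Set

variable {X : Type*} [PartialOrder X]

/-- The Heyting implication `T ⇨ V`; for `T = S` it is the nucleus `j_S V`. -/
def himpSet (T V : Set X) : Set X := {x | ∀ y, x ≤ y → y ∈ T → y ∈ V}

structure IsNISClosed (S : Set X) (F : Set (Set X)) : Prop where
  univ_mem : univ ∈ F
  inter_mem : ∀ V ∈ F, ∀ W ∈ F, V ∩ W ∈ F
  himp_mem : ∀ V ∈ F, ∀ W ∈ F, himpSet V W ∈ F
  nucleus_mem : ∀ V ∈ F, himpSet S V ∈ F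

def GeneratesUpperSets {ι : Type*} (S : Set X) (U : ι → Set X) : Prop :=
  ∀ F, (∀ i, U i ∈ F) → IsNISClosed S F → ∀ V, IsUpperSet V → V ∈ F

lemma generatesUpperSets_iff {ι : Type*} {S : Set X} {U : ι → Set X} :
    GeneratesUpperSets S U ↔ ∀ F : Set (Set X), (∀ i, U i ∈ F) → univ ∈ F →
      (∀ V ∈ F, ∀ W ∈ F, V ∩ W ∈ F) → (∀ V ∈ F, ∀ W ∈ F, himpSet V W ∈ F) →
      (∀ V ∈ F, himpSet S V ∈ F) → ∀ V, IsUpperSet V → V ∈ F :=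
  ⟨fun h F hUF huniv hinter himp hnuc => h F hUF ⟨huniv, hinter, himp, hnuc⟩,
    fun h F hUF hF => h F hUF hF.1 hF.2 hF.3 hF.4⟩

lemma isUpperSet_himpSet (T V : Set X) : IsUpperSet (himpSet T V) :=
  fun _ _ hab ha y hby => ha y (hab.trans hby)

lemma himpSet_Ici_Ioi (q : X) : himpSet (Ici q) (Ioi q) = (Iic q)ᶜ := by
  ext x
  refine ⟨fun h hxq => lt_irrefl q (h q hxq le_rfl), fun hxq y hxy hqy => ?_⟩
  exact hqy.lt_of_ne (by rintro rfl; exact hxq hxy)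

lemma mem_himpSet_Ioi_self_iff {V : Set X} {p : X} : p ∈ himpSet V (Ioi p) ↔ p ∉ V := by
  refine ⟨fun h hpV => lt_irrefl p (h p le_rfl hpV), fun hpV w hpw hwV => ?_⟩
  exact hpw.lt_of_ne (by rintro rfl; exact hpV hwV)

lemma covBy_iff_of_Ioi_eq {a b c : X} (h : Ioi a = Ioi b) : a ⋖ c ↔ b ⋖ c := by
  simp only [CovBy, ← mem_Ioi, h]

lemma IsUpperSet.biInter_compl_Iic {V : Set X} (hV : IsUpperSet V) :
    ⋂ q ∈ Vᶜ, (Iic q)ᶜ = V := by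
  ext x
  simp only [mem_iInter, mem_compl_iff, mem_Iic]
  exact ⟨fun h => not_not.1 fun hx => h x hx le_rfl, fun hx q hq hxq => hq (hV hxq hx)⟩

lemma IsNISClosed.sep_isUpperSet {S : Set X} {F : Set (Set X)} (hF : IsNISClosed S F) :
    IsNISClosed S {P ∈ F | IsUpperSet P} where
  univ_mem := ⟨hF.univ_mem, isUpperSet_univ⟩
  inter_mem V hV W hW := ⟨hF.inter_mem V hV.1 W hW.1, hV.2.inter hW.2⟩
  himp_mem V hV W hW := ⟨hF.himp_mem V hV.1 W hW.1, isUpperSet_himpSet V W⟩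
  nucleus_mem V hV := ⟨hF.nucleus_mem V hV.1, isUpperSet_himpSet S V⟩

lemma setOf_mem_eq_iInter_covBy_iff {ι : Type*} {U : ι → Set X} {x : X} :
    {i | x ∈ U i} = ⋂ y ∈ {y | x ⋖ y}, {i | y ∈ U i} ↔ ∀ i, x ∈ U i ↔ ∀ y, x ⋖ y → y ∈ U i := by
  simp [Set.ext_iff]

section Finite

variable [Finite X]

lemma IsNISClosed.sInter_mem {S : Set X} {F G : Set (Set X)} (hF : IsNISClosed S F)
    (hG : G ⊆ F) : ⋂₀ G ∈ F :=
  InfClosed.sInf_mem hF.inter_mem (toFinite G) hF.univ_mem hG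

lemma mem_himpSet_iff {T V : Set X} {x : X} :
    x ∈ himpSet T V ↔ (x ∈ T → x ∈ V) ∧ ∀ y, x ⋖ y → y ∈ himpSet T V := by
  refine ⟨fun h => ⟨h x le_rfl, fun y hxy => isUpperSet_himpSet T V hxy.le h⟩, ?_⟩
  rintro ⟨hx, hcov⟩ w hxw hwT
  obtain rfl | hlt := hxw.eq_or_lt
  · exact hx hwT
  · obtain ⟨y, hxy, hyw⟩ := exists_covBy_le_of_lt hlt
    exact hcov y hxy w hyw hwT

lemma Ioi_subset_of_forall_covBy {V : Set X} (hV : IsUpperSet V) {x : X}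
    (h : ∀ y, x ⋖ y → y ∈ V) : Ioi x ⊆ V := fun _ hw =>
  let ⟨y, hxy, hyw⟩ := exists_covBy_le_of_lt hw
  hV hyw (h y hxy)

lemma subset_of_forall_Ioi_subset {A B : Set X} (hA : IsUpperSet A)
    (h : ∀ a ∈ A, Ioi a ⊆ B → a ∈ B) : A ⊆ B := by
  intro a
  induction a using WellFoundedGT.induction with
  | _ a ih => exact fun ha => h a ha fun w hw => ih w hw (hA hw.le ha)

lemma mem_himpSet_of_forall_covBy {T V : Set X} {x : X} (hT : x ∈ T → ∀ y, x ⋖ y → y ∈ T)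
    (hV : (∀ y, x ⋖ y → y ∈ V) → x ∈ V) (h : ∀ y, x ⋖ y → y ∈ himpSet T V) :
    x ∈ himpSet T V :=
  mem_himpSet_iff.2 ⟨fun hxT => hV fun y hxy => h y hxy y le_rfl (hT hxT y hxy), h⟩

lemma mem_himpSet_congr {T V : Set X} {x y : X} (hcov : ∀ z, x ⋖ z ↔ y ⋖ z)
    (hT : x ∈ T ↔ y ∈ T) (hV : x ∈ V ↔ y ∈ V) : x ∈ himpSet T V ↔ y ∈ himpSet T V := by
  rw [mem_himpSet_iff, mem_himpSet_iff, hT, hV]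
  simp only [hcov]

lemma isNISClosed_setOf_mem_iff_forall_covBy {S : Set X} {x : X}
    (hS : x ∈ S → ∀ y, x ⋖ y → y ∈ S) :
    IsNISClosed S {V | x ∈ V ↔ ∀ y, x ⋖ y → y ∈ V} where
  univ_mem := by simp
  inter_mem _ hV _ hW := (and_congr hV hW).trans forall₂_and.symm
  himp_mem V hV W hW := ⟨fun h => (mem_himpSet_iff.1 h).2, mem_himpSet_of_forall_covBy hV.1 hW.2⟩
  nucleus_mem V hV := ⟨fun h => (mem_himpSet_iff.1 h).2, mem_himpSet_of_forall_covBy hS hV.2⟩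

lemma isNISClosed_setOf_mem_iff_mem {S : Set X} {x y : X} (hcov : ∀ z, x ⋖ z ↔ y ⋖ z)
    (hS : x ∈ S ↔ y ∈ S) : IsNISClosed S {V | x ∈ V ↔ y ∈ V} where
  univ_mem := by simp
  inter_mem _ hV _ hW := and_congr hV hW
  himp_mem _ hV _ hW := mem_himpSet_congr hcov hV hW
  nucleus_mem _ hV := mem_himpSet_congr hcov hS hV

variable {ι : Type*} {S : Set X} {U : ι → Set X}

lemma GeneratesUpperSets.mem_and_not_covBy_subset (h : GeneratesUpperSets S U) {x : X}
    (hx : ∀ i, x ∈ U i ↔ ∀ y, x ⋖ y → y ∈ U i) : x ∈ S ∧ ¬ {y | x ⋖ y} ⊆ S := by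
  by_contra! hS
  have hIoi := h _ hx (isNISClosed_setOf_mem_iff_forall_covBy hS) _ (isUpperSet_Ioi x)
  exact lt_irrefl x (hIoi.2 fun _ hxy => hxy.lt)

lemma GeneratesUpperSets.eq_of_covBy_eq (h : GeneratesUpperSets S U) {x y : X}
    (hcov : {z | x ⋖ z} = {z | y ⋖ z}) (hU : {i | x ∈ U i} = {i | y ∈ U i})
    (hS : x ∈ S ↔ y ∈ S) : x = y := by
  have hF := isNISClosed_setOf_mem_iff_mem (Set.ext_iff.1 hcov) hS
  have hUF : ∀ i, U i ∈ {V | x ∈ V ↔ y ∈ V} := Set.ext_iff.1 hU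
  exact le_antisymm ((h _ hUF hF _ (isUpperSet_Ici x)).1 le_rfl)
    ((h _ hUF hF _ (isUpperSet_Ici y)).2 le_rfl)

variable {F : Set (Set X)}

lemma Ioi_mem_of_forall_ssubset (hF : IsNISClosed S F) (hFup : ∀ P ∈ F, IsUpperSet P)
    (hUF : ∀ i, U i ∈ F)
    (h1 : ∀ x, (∀ i, x ∈ U i ↔ ∀ y, x ⋖ y → y ∈ U i) → x ∈ S ∧ ¬ {y | x ⋖ y} ⊆ S)
    {z : X} (ih : ∀ q, Ioi q ⊂ Ioi z → (Iic q)ᶜ ∈ F) : Ioi z ∈ F := by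
  set A := ⋂₀ {P ∈ F | Ioi z ⊆ P}
  have hA : ∀ P ∈ F, Ioi z ⊆ P → A ⊆ P := fun P hP hzP => sInter_subset_of_mem ⟨hP, hzP⟩
  suffices A ⊆ Ioi z by
    rw [← this.antisymm (subset_sInter fun P hP => hP.2)]
    exact hF.sInter_mem fun P hP => hP.1
  refine subset_of_forall_Ioi_subset (isUpperSet_sInter fun P hP => hFup P hP.1) ?_
  intro a ha haz
  by_contra hza
  obtain hlt | heq := haz.ssubset_or_eq
  · exact hA _ (ih a hlt) (fun w hzw hwa => hza (hzw.trans_le hwa)) ha le_rfl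
  have hcolor : ∀ i, a ∈ U i ↔ ∀ y, a ⋖ y → y ∈ U i := fun i =>
    ⟨fun hai _ hay => hFup _ (hUF i) hay.le hai,
      fun h => hA _ (hUF i) (heq ▸ Ioi_subset_of_forall_covBy (hFup _ (hUF i)) h) ha⟩
  obtain ⟨haS, hnot⟩ := h1 a hcolor
  obtain ⟨y, hay, hyS⟩ := not_subset.1 hnot
  have hzy := (covBy_iff_of_Ioi_eq heq).1 hay
  -- no point of `S` lies strictly above `z` and below the cover `y ∉ S` of `z`
  have hzP : Ioi z ⊆ himpSet S (Iic y)ᶜ := fun w hzw v hwv hvS hvy =>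
    hyS (hvy.eq_of_not_lt (hzy.2 (hzw.trans_le hwv)) ▸ hvS)
  exact hA _ (hF.nucleus_mem _ (ih y (Ioi_ssubset_Ioi hzy.lt))) hzP ha a le_rfl haS hay.le

lemma Ici_mem_of_forall_ssubset (hF : IsNISClosed S F) (hFup : ∀ P ∈ F, IsUpperSet P)
    (hUF : ∀ i, U i ∈ F)
    (h1 : ∀ x, (∀ i, x ∈ U i ↔ ∀ y, x ⋖ y → y ∈ U i) → x ∈ S ∧ ¬ {y | x ⋖ y} ⊆ S)
    (h2 : ∀ x y, {z | x ⋖ z} = {z | y ⋖ z} → {i | x ∈ U i} = {i | y ∈ U i} →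
      (x ∈ S ↔ y ∈ S) → x = y)
    {z : X} (ih : ∀ q, Ioi q ⊂ Ioi z → (Iic q)ᶜ ∈ F) (hz : Ioi z ∈ F) : Ici z ∈ F := by
  set B := ⋂₀ {P ∈ F | z ∈ P}
  have hB : ∀ P ∈ F, z ∈ P → B ⊆ P := fun P hP hzP => sInter_subset_of_mem ⟨hP, hzP⟩
  suffices B ⊆ Ici z by
    rw [← this.antisymm fun w hzw => mem_sInter.2 fun P hP => hFup P hP.1 hzw hP.2]
    exact hF.sInter_mem fun P hP => hP.1
  refine subset_of_forall_Ioi_subset (isUpperSet_sInter fun P hP => hFup P hP.1) ?_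
  rintro b hb (hbz : ∀ ⦃w⦄, b < w → z ≤ w)
  by_contra hzb
  by_cases hblt : b < z
  · have hbcz : b ⋖ z := ⟨hblt, fun c hbc hcz => hcz.not_ge (hbz hbc)⟩
    have hcolor : ∀ i, b ∈ U i ↔ ∀ y, b ⋖ y → y ∈ U i := fun i =>
      ⟨fun hbi _ hby => hFup _ (hUF i) hby.le hbi, fun h => hB _ (hUF i) (h z hbcz) hb⟩
    obtain ⟨hbS, hnot⟩ := h1 b hcolor
    obtain ⟨y, hby, hyS⟩ := not_subset.1 hnot
    obtain rfl : z = y := (hbz hby.lt).eq_of_not_lt (hby.2 hblt)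
    have hzS : z ∈ himpSet S (Ioi z) := mem_himpSet_Ioi_self_iff.2 hyS
    exact hzb (hB _ (hF.nucleus_mem _ hz) hzS hb b le_rfl hbS).le
  have hIoi : Ioi b ⊆ Ioi z := fun w hw => (hbz hw).lt_of_ne (by rintro rfl; exact hblt hw)
  obtain hlt | heq := hIoi.ssubset_or_eq
  · exact hB _ (ih b hlt) hzb hb le_rfl
  -- `V ⇨ Ioi z` is the complement of `V` at both `b` and `z`
  have hsep : ∀ V ∈ F, b ∈ V ↔ z ∈ V := by
    refine fun V hV => ⟨fun hbV => not_not.1 fun hzV => ?_, fun hzV => hB V hV hzV hb⟩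
    have hbV' := hB _ (hF.himp_mem V hV _ hz) (mem_himpSet_Ioi_self_iff.2 hzV) hb
    rw [← heq, mem_himpSet_Ioi_self_iff] at hbV'
    exact hbV' hbV
  have hS : b ∈ S ↔ z ∈ S := by
    have := hsep _ (hF.nucleus_mem _ hz)
    rwa [← heq, mem_himpSet_Ioi_self_iff, heq, mem_himpSet_Ioi_self_iff, not_iff_not] at this
  exact hzb (h2 b z (ext fun _ => covBy_iff_of_Ioi_eq heq) (ext fun i => hsep _ (hUF i)) hS).ge

lemma compl_Iic_mem (hF : IsNISClosed S F) (hFup : ∀ P ∈ F, IsUpperSet P)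
    (hUF : ∀ i, U i ∈ F)
    (h1 : ∀ x, (∀ i, x ∈ U i ↔ ∀ y, x ⋖ y → y ∈ U i) → x ∈ S ∧ ¬ {y | x ⋖ y} ⊆ S)
    (h2 : ∀ x y, {z | x ⋖ z} = {z | y ⋖ z} → {i | x ∈ U i} = {i | y ∈ U i} →
      (x ∈ S ↔ y ∈ S) → x = y)
    (q : X) : (Iic q)ᶜ ∈ F := by
  induction q using (InvImage.wf (fun q : X => Ioi q) wellFounded_lt).induction with | _ z ih
  have hz := Ioi_mem_of_forall_ssubset hF hFup hUF h1 ih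
  rw [← himpSet_Ici_Ioi]
  exact hF.himp_mem _ (Ici_mem_of_forall_ssubset hF hFup hUF h1 h2 ih hz) _ hz

theorem generatesUpperSets_of_coloring_conditions (hU : ∀ i, IsUpperSet (U i))
    (h1 : ∀ x, (∀ i, x ∈ U i ↔ ∀ y, x ⋖ y → y ∈ U i) → x ∈ S ∧ ¬ {y | x ⋖ y} ⊆ S)
    (h2 : ∀ x y, {z | x ⋖ z} = {z | y ⋖ z} → {i | x ∈ U i} = {i | y ∈ U i} →
      (x ∈ S ↔ y ∈ S) → x = y) :
    GeneratesUpperSets S U := by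
  intro F hUF hF V hV
  have hD := compl_Iic_mem hF.sep_isUpperSet (fun _ hP => hP.2) (fun i => ⟨hUF i, hU i⟩) h1 h2
  rw [← hV.biInter_compl_Iic, ← sInter_image]
  exact (hF.sep_isUpperSet.sInter_mem (image_subset_iff.2 fun q _ => hD q)).1

end Finite

end

/-- Coloring Theorem for nuclear implicative semilattices: the upsets `U 1, …, U n`
generate all upward-closed subsets of a finite poset `X` under intersection, the whole
set, Heyting implication, and the nucleus `j_S`, iff (1) every `x` with `c x = c (∇x)`
satisfies `x ∈ S` and `∇x ⊄ S`, and (2) distinct points are separated by covers, color,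
or membership in `S`. -/
theorem coloring_theorem_nis {X : Type*} [PartialOrder X] [Finite X]
    (S : Set X) (n : ℕ) (U : Fin n → Set X) (hU : ∀ i, IsUpperSet (U i)) :
    (∀ F : Set (Set X), (∀ i, U i ∈ F) → Set.univ ∈ F →
        (∀ V ∈ F, ∀ W ∈ F, V ∩ W ∈ F) →
        (∀ V ∈ F, ∀ W ∈ F, {x : X | ∀ y : X, x ≤ y → y ∈ V → y ∈ W} ∈ F) →
        (∀ V ∈ F, {x : X | ∀ y : X, x ≤ y → y ∈ S → y ∈ V} ∈ F) →
        ∀ V : Set X, IsUpperSet V → V ∈ F) ↔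
      ((∀ x : X,
          {i : Fin n | x ∈ U i} = ⋂ y ∈ {y : X | x ⋖ y}, {i : Fin n | y ∈ U i} →
          x ∈ S ∧ ¬ {y : X | x ⋖ y} ⊆ S) ∧
        (∀ x y : X, {z : X | x ⋖ z} = {z : X | y ⋖ z} →
          {i : Fin n | x ∈ U i} = {i : Fin n | y ∈ U i} →
          (x ∈ S ↔ y ∈ S) → x = y)) := by
  refine generatesUpperSets_iff.symm.trans ⟨fun h => ⟨?_, ?_⟩, fun ⟨h1, h2⟩ => ?_⟩
  · exact fun x hx => h.mem_and_not_covBy_subset (setOf_mem_eq_iInter_covBy_iff.1 hx)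
  · exact fun x y => h.eq_of_covBy_eq
  · refine generatesUpperSets_of_coloring_conditions hU (fun x hx => ?_) h2
    exact h1 x (setOf_mem_eq_iInter_covBy_iff.2 hx)
end

section
/- Coloring Theorem for bounded nuclear implicative semilattices: let X be a finite poset, S ⊆ X, and U_1, …, U_n upward-closed subsets of X with coloring c(x) = {i | x ∈ U_i}. Then the family of all upward-closed subsets of X is generated by U_1, …, U_n under intersection, the whole set, the empty set, the Heyting implication U ⇨ V = {x | ∀ y, x ≤ y → y ∈ U → y ∈ V}, and the nucleus j_S U = {x | ∀ y, x ≤ y → y ∈ S → y ∈ U}, if and only if: (1) for every non-maximal x ∈ X (i.e. there is y with x < y), if c(x) = c(∇x) then x ∈ S and ∇x ⊄ S; and (2) for all x, y ∈ X, if ∇x = ∇y, c(x) = c(y), and (x ∈ S ↔ y ∈ S), then x = y. -/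
/-!
Necessity. If (1) fails at `x`, the upper sets `V` with `∇x ⊆ V → x ∈ V` contain the
generators and are closed under the operations, but `Ioi x` is not among them. If (2) fails
for `x ≠ y`, no generated set tells `x` from `y`, whereas `Ici x` does.

Sufficiency. Every upper set is an intersection of sets `(Iic x)ᶜ`, and these are generated,
by downward induction on `x`. Given those above `x`, some generated `Q ∌ x` contains `Ioi x`:
a `U i` at a color gap, `∅` if `x` is maximal, and otherwise, by (1), `j_S (Iic z)ᶜ` for a cover
`z ∉ S`. The generated sets containing `x` intersect to `Ici x`, whence `(Iic x)ᶜ = Ici x ⇨ Q`.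
For this, let `v` with `¬x ≤ v` lie in every generated set containing `x`, with all covers of `v` above
`x`. If `v ⋖ x`, (1) at `v` makes `j_S Q` separate them. If conversely `x` lies in every
generated set containing `v`, then `x` and `v` have the same strict upper bounds and colors,
and `j_S Q` gives them the same membership in `S`, against (2). Otherwise some generated `M`
contains `v` but not `x`; cutting from `M` the points below those `u > x` that miss the
analogue `Q'` of `Q` at `v` gives `P` with `x ∈ P ⇨ Q' ∌ v`.
-/

open Set

namespace ColoringTheorem

variable {X : Type*} [PartialOrder X]

/-- Heyting implication in the lattice of upper sets of `X`; the nucleus `j_S` is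
`upperHimp S`. -/
def upperHimp (V W : Set X) : Set X := {x | ∀ y, x ≤ y → y ∈ V → y ∈ W}

lemma isUpperSet_upperHimp (V W : Set X) : IsUpperSet (upperHimp V W) :=
  fun _ _ hab ha y hby => ha y (hab.trans hby)

lemma mem_upperHimp_iff {V W : Set X} {x : X} :
    x ∈ upperHimp V W ↔ (x ∈ V → x ∈ W) ∧ ∀ y, x < y → y ∈ V → y ∈ W := by
  refine ⟨fun h => ⟨h x le_rfl, fun y hxy => h y hxy.le⟩, fun ⟨hx, hlt⟩ y hxy => ?_⟩
  rcases hxy.eq_or_lt with rfl | hxy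
  exacts [hx, hlt y hxy]

lemma mem_upperHimp_iff_of_Ioi_subset {V W : Set X} {x : X} (hW : Ioi x ⊆ W) :
    x ∈ upperHimp V W ↔ (x ∈ V → x ∈ W) := by
  simp only [mem_upperHimp_iff, and_iff_left_iff_imp]
  exact fun _ y hxy _ => hW hxy

lemma covBy_iff_of_Ioi_eq {x y z : X} (h : Ioi x = Ioi y) : x ⋖ z ↔ y ⋖ z := by
  simp only [CovBy, ← mem_Ioi, h]

lemma compl_Iic_eq_upperHimp {A Q : Set X} {x : X} (hxA : x ∈ A) (hA : A ⊆ Ici x)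
    (hxQ : x ∉ Q) (hQ : Ioi x ⊆ Q) : (Iic x)ᶜ = upperHimp A Q := by
  ext t
  refine ⟨fun ht y hty hyA => hQ ((hA hyA).lt_of_ne ?_), fun h htx => hxQ (h x htx hxA)⟩
  rintro rfl
  exact ht hty

lemma IsUpperSet.eq_iInter_compl_Iic {V : Set X} (hV : IsUpperSet V) :
    V = ⋂ y : ↥Vᶜ, (Iic (y : X))ᶜ := by
  ext t
  simp only [mem_iInter, mem_compl_iff, mem_Iic, Subtype.forall]
  exact ⟨fun ht y hy hty => hy (hV hty ht), fun h => by_contra fun ht => h t ht le_rfl⟩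

def HasColorGap {ι : Type*} (U : ι → Set X) (x : X) : Prop :=
  ∃ i, (∀ z, x ⋖ z → z ∈ U i) ∧ x ∉ U i

def CoverCondition {ι : Type*} (S : Set X) (U : ι → Set X) : Prop :=
  ∀ x, ¬IsMax x → ¬HasColorGap U x → x ∈ S ∧ ∃ z, x ⋖ z ∧ z ∉ S

def SeparationCondition {ι : Type*} (S : Set X) (U : ι → Set X) : Prop :=
  ∀ x y, (∀ z, x ⋖ z ↔ y ⋖ z) → (∀ i, x ∈ U i ↔ y ∈ U i) → (x ∈ S ↔ y ∈ S) → x = y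

lemma setOf_mem_eq_iInter_covBy_iff {ι : Type*} {U : ι → Set X} (hU : ∀ i, IsUpperSet (U i))
    {x : X} :
    {i | x ∈ U i} = ⋂ y ∈ {y | x ⋖ y}, {i | y ∈ U i} ↔ ¬HasColorGap U x := by
  simp only [Set.ext_iff, mem_ofPred_eq, mem_iInter, HasColorGap, not_exists, not_and,
    not_not]
  exact forall_congr' fun i => ⟨fun h => h.2, fun h => ⟨fun hx y hxy => hU i hxy.le hx, h⟩⟩

section StronglyAtomic

variable [IsStronglyAtomic X]

lemma exists_covBy_of_not_isMax {x : X} (hx : ¬IsMax x) : ∃ z, x ⋖ z := by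
  obtain ⟨y, hxy⟩ := not_isMax_iff.1 hx
  obtain ⟨z, hxz, -⟩ := exists_covBy_le_of_lt hxy
  exact ⟨z, hxz⟩

lemma Ioi_subset_of_forall_covBy {V : Set X} (hV : IsUpperSet V) {x : X}
    (h : ∀ z, x ⋖ z → z ∈ V) : Ioi x ⊆ V := fun _ hxy =>
  let ⟨z, hxz, hzy⟩ := exists_covBy_le_of_lt hxy
  hV hzy (h z hxz)

lemma Ioi_eq_of_forall_covBy_iff {x y : X} (h : ∀ z, x ⋖ z ↔ y ⋖ z) : Ioi x = Ioi y :=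
  Subset.antisymm (Ioi_subset_of_forall_covBy (isUpperSet_Ioi y) fun z hz => ((h z).1 hz).lt)
    (Ioi_subset_of_forall_covBy (isUpperSet_Ioi x) fun z hz => ((h z).2 hz).lt)

lemma mem_upperHimp_of_forall_covBy {V W : Set X} {x : X} (hx : x ∈ V → x ∈ W)
    (hcov : ∀ z, x ⋖ z → z ∈ upperHimp V W) : x ∈ upperHimp V W :=
  mem_upperHimp_iff.2 ⟨hx, fun y hxy =>
    Ioi_subset_of_forall_covBy (isUpperSet_upperHimp V W) hcov hxy y le_rfl⟩

end StronglyAtomic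

inductive Generated {ι : Type*} (S : Set X) (U : ι → Set X) : Set X → Prop
  | basic (i : ι) : Generated S U (U i)
  | univ : Generated S U univ
  | empty : Generated S U ∅
  | inter {V W : Set X} : Generated S U V → Generated S U W → Generated S U (V ∩ W)
  | himp {V W : Set X} : Generated S U V → Generated S U W → Generated S U (upperHimp V W)
  | nucleus {V : Set X} : Generated S U V → Generated S U (upperHimp S V)

namespace Generated

variable {ι : Type*} {S : Set X} {U : ι → Set X}

lemma isUpperSet (hU : ∀ i, IsUpperSet (U i)) {V : Set X} (hV : Generated S U V) :
    IsUpperSet V := by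
  induction hV with
  | basic i => exact hU i
  | univ => exact isUpperSet_univ
  | empty => exact isUpperSet_empty
  | inter _ _ hV hW => exact hV.inter hW
  | himp => exact isUpperSet_upperHimp _ _
  | nucleus => exact isUpperSet_upperHimp _ _

lemma iInter {κ : Type*} [Finite κ] {f : κ → Set X} (h : ∀ k, Generated S U (f k)) :
    Generated S U (⋂ k, f k) := by
  have := Fintype.ofFinite κ
  rw [← iInf_eq_iInter, ← Finset.inf_univ_eq_iInf]
  exact Finset.inf_induction univ (fun _ hV _ hW => hV.inter hW) fun k _ => h k

lemma mem_of_forall_covBy [IsStronglyAtomic X] (hU : ∀ i, IsUpperSet (U i)) {x : X}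
    (hx : ¬IsMax x) (hgap : ¬HasColorGap U x) (hS : x ∈ S → ∀ z, x ⋖ z → z ∈ S) {V : Set X}
    (hV : Generated S U V) : (∀ z, x ⋖ z → z ∈ V) → x ∈ V := by
  induction hV with
  | basic i => exact fun h => by_contra fun hxi => hgap ⟨i, h, hxi⟩
  | univ => exact fun _ => mem_univ x
  | empty =>
    obtain ⟨z, hxz⟩ := exists_covBy_of_not_isMax hx
    exact fun h => h z hxz
  | inter _ _ ihV ihW =>
    exact fun h => ⟨ihV fun z hz => (h z hz).1, ihW fun z hz => (h z hz).2⟩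
  | himp hV _ _ ihW =>
    exact fun h => mem_upperHimp_of_forall_covBy
      (fun hxV => ihW fun z hz => h z hz z le_rfl (hV.isUpperSet hU hz.le hxV)) h
  | nucleus _ ihV =>
    exact fun h => mem_upperHimp_of_forall_covBy
      (fun hxS => ihV fun z hz => h z hz z le_rfl (hS hxS z hz)) h

lemma mem_iff_mem_of_forall_covBy_iff [IsStronglyAtomic X] {x y : X}
    (hcov : ∀ z, x ⋖ z ↔ y ⋖ z) (hcol : ∀ i, x ∈ U i ↔ y ∈ U i) (hS : x ∈ S ↔ y ∈ S)
    {V : Set X} (hV : Generated S U V) : x ∈ V ↔ y ∈ V := by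
  have hIoi := Ioi_eq_of_forall_covBy_iff hcov
  induction hV with
  | basic i => exact hcol i
  | univ => exact Iff.rfl
  | empty => exact Iff.rfl
  | inter _ _ ihV ihW => exact and_congr ihV ihW
  | himp _ _ ihV ihW =>
    simp only [mem_upperHimp_iff, ← mem_Ioi, hIoi, ihV, ihW]
  | nucleus _ ihV =>
    simp only [mem_upperHimp_iff, ← mem_Ioi, hIoi, hS, ihV]

lemma mem_of_closed {F : Set (Set X)} (hU : ∀ i, U i ∈ F) (huniv : Set.univ ∈ F)
    (hempty : ∅ ∈ F) (hinter : ∀ V ∈ F, ∀ W ∈ F, V ∩ W ∈ F)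
    (hhimp : ∀ V ∈ F, ∀ W ∈ F, upperHimp V W ∈ F) (hnuc : ∀ V ∈ F, upperHimp S V ∈ F)
    {V : Set X} (hV : Generated S U V) : V ∈ F := by
  induction hV with
  | basic i => exact hU i
  | univ => exact huniv
  | empty => exact hempty
  | inter _ _ ihV ihW => exact hinter _ ihV _ ihW
  | himp _ _ ihV ihW => exact hhimp _ ihV _ ihW
  | nucleus _ ihV => exact hnuc _ ihV

theorem forall_mem_of_closed_iff :
    (∀ F : Set (Set X), (∀ i, U i ∈ F) → Set.univ ∈ F → ∅ ∈ F →
        (∀ V ∈ F, ∀ W ∈ F, V ∩ W ∈ F) → (∀ V ∈ F, ∀ W ∈ F, upperHimp V W ∈ F) →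
        (∀ V ∈ F, upperHimp S V ∈ F) → ∀ V, IsUpperSet V → V ∈ F) ↔
      ∀ V, IsUpperSet V → Generated S U V :=
  ⟨fun h => h {V | Generated S U V} basic univ empty (fun _ hV _ hW => hV.inter hW)
    (fun _ hV _ hW => hV.himp hW) fun _ hV => hV.nucleus,
    fun h _ hU huniv hempty hinter hhimp hnuc V hV =>
      (h V hV).mem_of_closed hU huniv hempty hinter hhimp hnuc⟩

end Generated

section Necessity

variable [IsStronglyAtomic X] {ι : Type*} {S : Set X} {U : ι → Set X}

lemma coverCondition_of_forall_generated (hU : ∀ i, IsUpperSet (U i))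
    (hgen : ∀ V, IsUpperSet V → Generated S U V) : CoverCondition S U := by
  intro x hx hgap
  by_contra hS
  simp only [not_and, not_exists, not_not] at hS
  exact lt_irrefl x <| (hgen (Ioi x) (isUpperSet_Ioi x)).mem_of_forall_covBy hU hx hgap hS
    fun z hz => hz.lt

lemma separationCondition_of_forall_generated (hgen : ∀ V, IsUpperSet V → Generated S U V) :
    SeparationCondition S U := by
  intro x y hcov hcol hS
  have hmem {V : Set X} (hV : IsUpperSet V) : x ∈ V ↔ y ∈ V :=
    (hgen V hV).mem_iff_mem_of_forall_covBy_iff hcov hcol hS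
  exact le_antisymm ((hmem (isUpperSet_Ici x)).1 le_rfl) ((hmem (isUpperSet_Ici y)).2 le_rfl)

end Necessity

section Sufficiency

variable {ι : Type*} {S : Set X} {U : ι → Set X}

def GenLE (S : Set X) (U : ι → Set X) (x v : X) : Prop :=
  ∀ W, Generated S U W → x ∈ W → v ∈ W

lemma GenLE.trans_le (hU : ∀ i, IsUpperSet (U i)) {x v w : X} (h : GenLE S U x v)
    (hvw : v ≤ w) : GenLE S U x w :=
  fun W hW hxW => hW.isUpperSet hU hvw (h W hW hxW)

lemma exists_generated_Ioi_subset [IsStronglyAtomic X] (hU : ∀ i, IsUpperSet (U i))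
    (h1 : CoverCondition S U) {x : X}
    (IH : ∀ u, x < u → Generated S U (Iic u)ᶜ) :
    ∃ Q, Generated S U Q ∧ x ∉ Q ∧ Ioi x ⊆ Q := by
  by_cases hx : IsMax x
  · exact ⟨∅, .empty, notMem_empty x, hx.Ioi_eq.subset⟩
  by_cases hgap : HasColorGap U x
  · obtain ⟨i, hcov, hxi⟩ := hgap
    exact ⟨U i, .basic i, hxi, Ioi_subset_of_forall_covBy (hU i) hcov⟩
  obtain ⟨hxS, z, hxz, hzS⟩ := h1 x hx hgap
  refine ⟨upperHimp S (Iic z)ᶜ, (IH z hxz.lt).nucleus, fun h => h x le_rfl hxS hxz.le,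
    fun t hxt u htu huS huz => hzS ?_⟩
  rwa [← huz.eq_or_lt.resolve_right (hxz.2 (hxt.trans_le htu))]

variable {x v : X} {Q : Set X}

lemma GenLE.false_of_covBy (hU : ∀ i, IsUpperSet (U i))
    (h1 : CoverCondition S U)
    (hQ : Generated S U Q) (hxQ : x ∉ Q) (hQx : Ioi x ⊆ Q) (h : GenLE S U x v)
    (hvx : v ⋖ x) (hcov : ∀ z, v ⋖ z → x ≤ z) : False := by
  have hgap : ¬HasColorGap U v := fun ⟨i, hi, hvi⟩ => hvi (h _ (.basic i) (hi x hvx))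
  obtain ⟨hvS, z, hvz, hzS⟩ := h1 v (not_isMax_of_lt hvx.lt) hgap
  obtain rfl : z = x := ((hcov z hvz).eq_or_lt.resolve_right (hvz.2 hvx.lt)).symm
  have hzQ : z ∈ upperHimp S Q :=
    (mem_upperHimp_iff_of_Ioi_subset hQx).2 fun hzS' => absurd hzS' hzS
  exact hxQ (hQ.isUpperSet hU hvx.le (h _ hQ.nucleus hzQ v le_rfl hvS))

lemma GenLE.false_of_not_genLE [Finite X] (IH : ∀ u, x < u → Generated S U (Iic u)ᶜ)
    (hQ : Generated S U Q) (hvQ : v ∉ Q) (hQv : Ioi v ⊆ Q) (h : GenLE S U x v)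
    (h' : ¬GenLE S U v x) (hxv : ¬x ≤ v) : False := by
  obtain ⟨M, hM, hvM, hxM⟩ : ∃ M, Generated S U M ∧ v ∈ M ∧ x ∉ M := by
    simpa [GenLE] using h'
  set P := M ∩ ⋂ u : {u | x < u ∧ u ∉ Q}, (Iic (u : X))ᶜ
  have hP : Generated S U P := hM.inter (.iInter fun u => IH u u.2.1)
  have hvP : v ∈ P := by
    refine ⟨hvM, mem_iInter.2 fun ⟨u, hxu, huQ⟩ hvu => ?_⟩
    rcases hvu.eq_or_lt with rfl | hvu
    exacts [hxv hxu.le, huQ (hQv hvu)]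
  refine hvQ (h _ (hP.himp hQ) (fun t hxt htP => ?_) v le_rfl hvP)
  rcases hxt.eq_or_lt with rfl | hxt
  · exact absurd htP.1 hxM
  · exact by_contra fun htQ => mem_iInter.1 htP.2 ⟨t, hxt, htQ⟩ le_rfl

lemma GenLE.false_of_genLE
    (h2 : SeparationCondition S U)
    (IH : ∀ u, x < u → Generated S U (Iic u)ᶜ) (hQ : Generated S U Q) (hxQ : x ∉ Q)
    (hQx : Ioi x ⊆ Q) (h : GenLE S U x v) (h' : GenLE S U v x) (hxv : ¬x ≤ v)
    (hIoi : Ioi v ⊆ Ioi x) : False := by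
  have hmem {W : Set X} (hW : Generated S U W) : x ∈ W ↔ v ∈ W := ⟨h W hW, h' W hW⟩
  have hIoi_eq : Ioi x = Ioi v := by
    refine Subset.antisymm (fun u hxu => ?_) hIoi
    have hvu : v ≤ u := by_contra fun hvu => (hmem (IH u hxu)).2 hvu hxu.le
    exact hvu.lt_of_ne fun hvu => hxv (hvu ▸ hxu.le)
  have hS := hmem hQ.nucleus
  rw [mem_upperHimp_iff_of_Ioi_subset hQx, mem_upperHimp_iff_of_Ioi_subset (hIoi_eq ▸ hQx),
    ← hmem hQ, iff_false_intro hxQ, imp_false, imp_false, not_iff_not] at hS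
  exact hxv (h2 x v (fun z => covBy_iff_of_Ioi_eq hIoi_eq) (fun i => hmem (.basic i)) hS).le

lemma GenLE.le [Finite X] (hU : ∀ i, IsUpperSet (U i))
    (h1 : CoverCondition S U)
    (h2 : SeparationCondition S U)
    (IH : ∀ u, x < u → Generated S U (Iic u)ᶜ) (hQ : Generated S U Q) (hxQ : x ∉ Q)
    (hQx : Ioi x ⊆ Q) (h : GenLE S U x v) : x ≤ v := by
  induction v using WellFoundedGT.induction with
  | _ v IHv =>
  by_contra hxv
  have hcov : ∀ z, v ⋖ z → x ≤ z := fun z hvz => IHv z hvz.lt (h.trans_le hU hvz.le)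
  by_cases hvx : v ⋖ x
  · exact h.false_of_covBy hU h1 hQ hxQ hQx hvx hcov
  have hIoi : Ioi v ⊆ Ioi x := Ioi_subset_of_forall_covBy (isUpperSet_Ioi x) fun z hvz =>
    (hcov z hvz).lt_of_ne fun hxz => hvx (hxz ▸ hvz)
  by_cases h' : GenLE S U v x
  · exact h.false_of_genLE h2 IH hQ hxQ hQx h' hxv hIoi
  obtain ⟨Qv, hQv, hvQv, hQvv⟩ := exists_generated_Ioi_subset hU h1 fun u hvu => IH u (hIoi hvu)
  exact h.false_of_not_genLE IH hQv hvQv hQvv h' hxv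

lemma generated_compl_Iic [Finite X] (hU : ∀ i, IsUpperSet (U i))
    (h1 : CoverCondition S U)
    (h2 : SeparationCondition S U)
    (x : X) : Generated S U (Iic x)ᶜ := by
  induction x using WellFoundedGT.induction with
  | _ x IH =>
  obtain ⟨Q, hQ, hxQ, hQx⟩ := exists_generated_Ioi_subset hU h1 IH
  set A := ⋂ W : {W | Generated S U W ∧ x ∈ W}, (W : Set X)
  have hA : A ⊆ Ici x := fun v hv =>
    GenLE.le hU h1 h2 IH hQ hxQ hQx fun W hW hxW => mem_iInter.1 hv ⟨W, hW, hxW⟩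
  rw [compl_Iic_eq_upperHimp (mem_iInter.2 fun W => W.2.2) hA hxQ hQx]
  exact (Generated.iInter fun W => W.2.1).himp hQ

end Sufficiency

theorem forall_generated_iff [Finite X] {ι : Type*} {S : Set X} {U : ι → Set X}
    (hU : ∀ i, IsUpperSet (U i)) :
    (∀ V, IsUpperSet V → Generated S U V) ↔
      CoverCondition S U ∧ SeparationCondition S U := by
  refine ⟨fun hgen => ⟨coverCondition_of_forall_generated hU hgen,
    separationCondition_of_forall_generated hgen⟩, fun ⟨h1, h2⟩ V hV => ?_⟩
  rw [IsUpperSet.eq_iInter_compl_Iic hV]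
  exact .iInter fun y => generated_compl_Iic hU h1 h2 y

end ColoringTheorem

open ColoringTheorem

/-- Coloring Theorem for bounded nuclear implicative semilattices: the upsets
`U 1, …, U n` generate all upward-closed subsets of a finite poset `X` under
intersection, the whole set, the empty set, Heyting implication, and the nucleus `j_S`,
iff (1) every non-maximal `x` with `c x = c (∇x)` satisfies `x ∈ S` and `∇x ⊄ S`, and
(2) distinct points are separated by covers, color, or membership in `S`. -/
theorem coloring_theorem_bounded_nis {X : Type*} [PartialOrder X] [Finite X]
    (S : Set X) (n : ℕ) (U : Fin n → Set X) (hU : ∀ i, IsUpperSet (U i)) :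
    (∀ F : Set (Set X), (∀ i, U i ∈ F) → Set.univ ∈ F → (∅ : Set X) ∈ F →
        (∀ V ∈ F, ∀ W ∈ F, V ∩ W ∈ F) →
        (∀ V ∈ F, ∀ W ∈ F, {x : X | ∀ y : X, x ≤ y → y ∈ V → y ∈ W} ∈ F) →
        (∀ V ∈ F, {x : X | ∀ y : X, x ≤ y → y ∈ S → y ∈ V} ∈ F) →
        ∀ V : Set X, IsUpperSet V → V ∈ F) ↔
      ((∀ x : X, (∃ y : X, x < y) →
          {i : Fin n | x ∈ U i} = ⋂ y ∈ {y : X | x ⋖ y}, {i : Fin n | y ∈ U i} →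
          x ∈ S ∧ ¬ {y : X | x ⋖ y} ⊆ S) ∧
        (∀ x y : X, {z : X | x ⋖ z} = {z : X | y ⋖ z} →
          {i : Fin n | x ∈ U i} = {i : Fin n | y ∈ U i} →
          (x ∈ S ↔ y ∈ S) → x = y)) := by
  refine Generated.forall_mem_of_closed_iff.trans <| (forall_generated_iff hU).trans <|
    and_congr (forall_congr' fun x => ?_) ?_
  · rw [setOf_mem_eq_iInter_covBy_iff hU, Set.not_subset, not_isMax_iff]
    rfl
  · simp only [SeparationCondition, Set.ext_iff, mem_ofPred_eq]
end

section
/- Coloring Theorem for implicative semilattices: let X be a finite poset and U_1, …, U_n upward-closed subsets of X with coloring c(x) = {i | x ∈ U_i}. Then the family of all upward-closed subsets of X is generated by U_1, …, U_n under intersection, the whole set, and the Heyting implication U ⇨ V = {x | ∀ y, x ≤ y → y ∈ U → y ∈ V}, if and only if: (1) for every x ∈ X, c(x) is a proper subset of c(∇x); and (2) for all x, y ∈ X, if ∇x = ∇y and c(x) = c(y), then x = y. -/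
/-!
Necessity: the upper sets `V` such that `x ∈ V` as soon as all covers of `x` lie in `V` form
a family closed under `∩`, `univ` and `⇨`, and so do the sets that do not separate two points
with the same covers and the same colour. So if (1) fails at `x`, the upper set `{z | x < z}`
is not generated, and if (2) fails at `x ≠ y`, one of `↑x`, `↑y` is not generated.

Sufficiency: by induction on upper sets `V` ordered by inclusion, it is enough to find, for
every maximal point `m` outside `V`, a generated superset of `V` missing `m`. If some generated
`P ∋ m` misses a point of `V`, take `P ⇨ (V ∩ P)`. Otherwise take the intersection of the `U i`
containing `∇m`, which misses `m` by (1). Were it to miss some `a ∈ V`, then `m` and `a` would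
lie in the same generated sets; testing this on the generated sets `X ∖ ↓w = ↑w ⇨ (↑w ∖ {w})`
for `w ∈ V` gives `{z | m < z} = {z | a < z}`, hence `∇m = ∇a`, and (2) forces `m = a ∈ V`.
-/

open Set

section

variable {ι X : Type*} [PartialOrder X]

/-- The Heyting implication of the lattice of upper sets. -/
def upperHimp (V W : Set X) : Set X := {x | ∀ y, x ≤ y → y ∈ V → y ∈ W}

def coloring (U : ι → Set X) (x : X) : Set ι := {i | x ∈ U i}

lemma isUpperSet_upperHimp (V W : Set X) : IsUpperSet (upperHimp V W) :=
  fun _ _ hab ha y hby hyV => ha y (hab.trans hby) hyV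

lemma mem_upperHimp_iff [IsStronglyAtomic X] {V W : Set X} {x : X} :
    x ∈ upperHimp V W ↔ (x ∈ V → x ∈ W) ∧ ∀ y, x ⋖ y → y ∈ upperHimp V W := by
  refine ⟨fun h => ⟨h x le_rfl, fun y hxy => isUpperSet_upperHimp V W hxy.le h⟩, ?_⟩
  rintro ⟨hx, hcov⟩ s hxs hsV
  obtain rfl | hlt := hxs.eq_or_lt
  · exact hx hsV
  · obtain ⟨y, hxy, hys⟩ := exists_covBy_le_of_lt hlt
    exact hcov y hxy s hys hsV

lemma compl_Iic_eq_upperHimp (w : X) : (Iic w)ᶜ = upperHimp (Ici w) (Ioi w) := by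
  ext u
  simp only [mem_compl_iff, mem_Iic, upperHimp, mem_ofPred_eq, mem_Ici, mem_Ioi]
  refine ⟨fun hu s hus hws => hws.lt_of_ne ?_, fun h hu => lt_irrefl w (h w hu le_rfl)⟩
  rintro rfl
  exact hu hus

lemma setOf_covBy_eq_of_Ioi_eq {x y : X} (h : Ioi x = Ioi y) :
    {z | x ⋖ z} = {z | y ⋖ z} := by
  ext z
  simp only [mem_ofPred_eq, CovBy, ← mem_Ioi, h]

lemma coloring_ssubset_iff {U : ι → Set X} (hU : ∀ i, IsUpperSet (U i)) (x : X) :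
    coloring U x ⊂ ⋂ y ∈ {y | x ⋖ y}, coloring U y ↔
      ∃ i, (∀ y, x ⋖ y → y ∈ U i) ∧ x ∉ U i := by
  refine (ssubset_iff_of_subset fun i hi => mem_iInter₂.2 fun y hy => hU i hy.le hi).trans ?_
  exact exists_congr fun i => and_congr_left' mem_iInter₂

inductive GenerateImplicative (U : ι → Set X) : Set X → Prop
  | basic (i : ι) : GenerateImplicative U (U i)
  | univ : GenerateImplicative U univ
  | inter {V W : Set X} :
      GenerateImplicative U V → GenerateImplicative U W → GenerateImplicative U (V ∩ W)
  | himp {V W : Set X} :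
      GenerateImplicative U V → GenerateImplicative U W → GenerateImplicative U (upperHimp V W)

namespace GenerateImplicative

variable {U : ι → Set X} {V : Set X}

lemma mem_of_closed {F : Set (Set X)} (hFU : ∀ i, U i ∈ F) (hFuniv : Set.univ ∈ F)
    (hFinter : ∀ V ∈ F, ∀ W ∈ F, V ∩ W ∈ F)
    (hFhimp : ∀ V ∈ F, ∀ W ∈ F, upperHimp V W ∈ F) (hV : GenerateImplicative U V) : V ∈ F := by
  induction hV with
  | basic i => exact hFU i
  | univ => exact hFuniv
  | inter _ _ hV hW => exact hFinter _ hV _ hW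
  | himp _ _ hV hW => exact hFhimp _ hV _ hW

lemma isUpperSet (hU : ∀ i, IsUpperSet (U i)) (hV : GenerateImplicative U V) : IsUpperSet V := by
  induction hV with
  | basic i => exact hU i
  | univ => exact isUpperSet_univ
  | inter _ _ hV hW => exact hV.inter hW
  | himp => exact isUpperSet_upperHimp _ _

lemma sInter {S : Set (Set X)} (hS : S.Finite) (hgen : ∀ V ∈ S, GenerateImplicative U V) :
    GenerateImplicative U (⋂₀ S) := by
  induction S, hS using Set.Finite.induction_on with
  | empty => simpa using univ
  | insert _ _ ih =>
    rw [sInter_insert]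
    exact inter (hgen _ (mem_insert _ _)) (ih fun V hV => hgen V (mem_insert_of_mem _ hV))

lemma of_forall_exists_superset_notMem [Finite X]
    (h : ∀ u ∉ V, ∃ W, GenerateImplicative U W ∧ V ⊆ W ∧ u ∉ W) : GenerateImplicative U V := by
  have hV : V = ⋂₀ {W | GenerateImplicative U W ∧ V ⊆ W} := by
    refine subset_antisymm (subset_sInter fun W hW => hW.2) fun u hu => ?_
    by_contra huV
    obtain ⟨W, hW, hVW, huW⟩ := h u huV
    exact huW (hu W ⟨hW, hVW⟩)
  rw [hV]
  exact sInter (toFinite _) fun W hW => hW.1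

section Necessity

variable [IsStronglyAtomic X]

lemma mem_of_forall_covBy_mem (hU : ∀ i, IsUpperSet (U i)) {x : X}
    (hx : ∀ i, (∀ y, x ⋖ y → y ∈ U i) → x ∈ U i) (hV : GenerateImplicative U V)
    (hcov : ∀ y, x ⋖ y → y ∈ V) : x ∈ V := by
  induction hV with
  | basic i => exact hx i hcov
  | univ => trivial
  | inter _ _ hV hW =>
    exact ⟨hV fun y hy => (hcov y hy).1, hW fun y hy => (hcov y hy).2⟩
  | himp hV' _ _ hW =>
    refine mem_upperHimp_iff.2 ⟨fun hxV => hW fun y hy => ?_, hcov⟩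
    exact hcov y hy y le_rfl (hV'.isUpperSet hU hy.le hxV)

lemma mem_iff_of_covBy_iff {x y : X} (hcov : ∀ z, x ⋖ z ↔ y ⋖ z)
    (hcol : ∀ i, x ∈ U i ↔ y ∈ U i) (hV : GenerateImplicative U V) : x ∈ V ↔ y ∈ V := by
  induction hV with
  | basic i => exact hcol i
  | univ => exact Iff.rfl
  | inter _ _ hV hW => exact and_congr hV hW
  | himp _ _ hV hW =>
    rw [mem_upperHimp_iff, mem_upperHimp_iff (x := y), hV, hW]
    simp only [hcov]

lemma exists_forall_covBy_mem_notMem (hU : ∀ i, IsUpperSet (U i))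
    (h : ∀ V, IsUpperSet V → GenerateImplicative U V) (x : X) :
    ∃ i, (∀ y, x ⋖ y → y ∈ U i) ∧ x ∉ U i := by
  by_contra! hx
  exact lt_irrefl x (mem_of_forall_covBy_mem hU hx (h _ (isUpperSet_Ioi x)) fun y hy => hy.lt)

lemma eq_of_covBy_eq_of_coloring_eq (h : ∀ V, IsUpperSet V → GenerateImplicative U V)
    {x y : X} (hcov : {z | x ⋖ z} = {z | y ⋖ z}) (hcol : coloring U x = coloring U y) :
    x = y := by
  have hmem : ∀ V, IsUpperSet V → (x ∈ V ↔ y ∈ V) := fun V hV =>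
    mem_iff_of_covBy_iff (Set.ext_iff.1 hcov) (Set.ext_iff.1 hcol) (h V hV)
  exact le_antisymm ((hmem _ (isUpperSet_Ici x)).1 le_rfl) ((hmem _ (isUpperSet_Ici y)).2 le_rfl)

end Necessity

section Sufficiency

variable {m a : X}

lemma mem_iff_of_forall_mem_imp [IsStronglyAtomic X] (hU : ∀ i, IsUpperSet (U i)) {j : ι}
    (hma : ∀ P, GenerateImplicative U P → m ∈ P → a ∈ P) (hmj : ∀ y, m ⋖ y → y ∈ U j)
    (haj : a ∉ U j) (P : Set X) (hP : GenerateImplicative U P) : m ∈ P ↔ a ∈ P := by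
  refine ⟨hma P hP, fun haP => by_contra fun hmP => haj ?_⟩
  -- `m` lies in `P ⇨ U j`: the only point of `↑m` outside `↑∇m ⊆ U j` is `m ∉ P`.
  have hm : m ∈ upperHimp P (U j) :=
    mem_upperHimp_iff.2 ⟨fun h => absurd h hmP, fun y hy s hys _ => hU j hys (hmj y hy)⟩
  exact hma _ (himp hP (basic j)) hm a le_rfl haP

lemma Ioi_eq_Ioi_of_forall_mem_iff (hV : IsUpperSet V)
    (IH : ∀ V' ⊂ V, IsUpperSet V' → GenerateImplicative U V') (hmV : m ∉ V)
    (hmax : ∀ w, m < w → w ∈ V) (ha : a ∈ V) (hma : ¬ m ≤ a)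
    (hequiv : ∀ P, GenerateImplicative U P → (m ∈ P ↔ a ∈ P)) : Ioi m = Ioi a := by
  have hle : ∀ w ∈ V, ¬ w ≤ a → (m ≤ w ↔ a ≤ w) := by
    intro w hw hwa
    have hIci : GenerateImplicative U (Ici w) :=
      IH _ ⟨fun u hu => hV hu hw, fun h => hwa (h ha)⟩ (isUpperSet_Ici w)
    have hIoi : GenerateImplicative U (Ioi w) :=
      IH _ ⟨fun u hu => hV hu.le hw, fun h => hwa (h ha).le⟩ (isUpperSet_Ioi w)
    have := hequiv _ (compl_Iic_eq_upperHimp w ▸ himp hIci hIoi)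
    simpa only [mem_compl_iff, mem_Iic, not_iff_not] using this
  ext w
  simp only [mem_Ioi]
  constructor
  · intro hmw
    have hwa : ¬ w ≤ a := fun h => hma (hmw.le.trans h)
    exact lt_of_le_not_ge ((hle w (hmax w hmw) hwa).1 hmw.le) hwa
  · intro haw
    have hwV : w ∈ V := hV haw.le ha
    refine ((hle w hwV haw.not_ge).2 haw.le).lt_of_ne ?_
    rintro rfl
    exact hmV hwV

variable [Finite X]

lemma exists_superset_notMem (hU : ∀ i, IsUpperSet (U i))
    (h1 : ∀ x, ∃ i, (∀ y, x ⋖ y → y ∈ U i) ∧ x ∉ U i)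
    (h2 : ∀ x y : X, {z | x ⋖ z} = {z | y ⋖ z} → coloring U x = coloring U y → x = y)
    (hV : IsUpperSet V) (IH : ∀ V' ⊂ V, IsUpperSet V' → GenerateImplicative U V')
    (hmV : m ∉ V) (hmax : ∀ w, m < w → w ∈ V) :
    ∃ W, GenerateImplicative U W ∧ V ⊆ W ∧ m ∉ W := by
  by_cases hsep : ∃ P, GenerateImplicative U P ∧ m ∈ P ∧ ¬ V ⊆ P
  · obtain ⟨P, hP, hmP, hVP⟩ := hsep
    have hVinterP : GenerateImplicative U (V ∩ P) :=
      IH _ ⟨inter_subset_left, fun h => hVP (h.trans inter_subset_right)⟩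
        (hV.inter (hP.isUpperSet hU))
    exact ⟨_, himp hP hVinterP, fun b hb s hbs hsP => ⟨hV hbs hb, hsP⟩,
      fun h => hmV (h m le_rfl hmP).1⟩
  push Not at hsep
  obtain ⟨i, hmi, hmi'⟩ := h1 m
  refine ⟨⋂₀ (U '' {i | ∀ y, m ⋖ y → y ∈ U i}),
    sInter (toFinite _) (by rintro _ ⟨i, -, rfl⟩; exact basic i), ?_,
    fun h => hmi' (h _ ⟨i, hmi, rfl⟩)⟩
  rintro a ha _ ⟨j, hmj, rfl⟩
  by_contra haj
  have hequiv := mem_iff_of_forall_mem_imp hU (fun P hP hmP => hsep P hP hmP ha) hmj haj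
  have hma : ¬ m ≤ a := by
    intro hle
    obtain rfl | hlt := hle.eq_or_lt
    · exact hmV ha
    obtain ⟨y, hmy, hya⟩ := exists_covBy_le_of_lt hlt
    exact haj (hU j hya (hmj y hmy))
  have hIoi := Ioi_eq_Ioi_of_forall_mem_iff hV IH hmV hmax ha hma hequiv
  have hcol : coloring U m = coloring U a := Set.ext fun k => hequiv _ (basic k)
  exact hmV (h2 m a (setOf_covBy_eq_of_Ioi_eq hIoi) hcol ▸ ha)

theorem of_isUpperSet (hU : ∀ i, IsUpperSet (U i))
    (h1 : ∀ x, ∃ i, (∀ y, x ⋖ y → y ∈ U i) ∧ x ∉ U i)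
    (h2 : ∀ x y : X, {z | x ⋖ z} = {z | y ⋖ z} → coloring U x = coloring U y → x = y)
    (hV : IsUpperSet V) : GenerateImplicative U V := by
  induction V using WellFoundedLT.induction with | ind V IH =>
  refine of_forall_exists_superset_notMem fun u hu => ?_
  obtain ⟨m, hum, hm⟩ := Finite.exists_le_maximal (p := (· ∉ V)) hu
  obtain ⟨W, hW, hVW, hmW⟩ := exists_superset_notMem hU h1 h2 hV IH hm.prop
    fun w hmw => not_not.1 (hm.not_prop_of_gt hmw)
  exact ⟨W, hW, hVW, fun huW => hmW (hW.isUpperSet hU hum huW)⟩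

end Sufficiency

end GenerateImplicative

end

/-- Coloring Theorem for implicative semilattices: the upsets `U 1, …, U n` generate all
upward-closed subsets of a finite poset `X` under intersection, the whole set, and
Heyting implication, iff (1) the color of each `x` is a proper subset of the color of its
set of covers `∇x`, and (2) distinct points are separated by covers or color. -/
theorem coloring_theorem_is {X : Type*} [PartialOrder X] [Finite X]
    (n : ℕ) (U : Fin n → Set X) (hU : ∀ i, IsUpperSet (U i)) :
    (∀ F : Set (Set X), (∀ i, U i ∈ F) → Set.univ ∈ F →
        (∀ V ∈ F, ∀ W ∈ F, V ∩ W ∈ F) →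
        (∀ V ∈ F, ∀ W ∈ F, {x : X | ∀ y : X, x ≤ y → y ∈ V → y ∈ W} ∈ F) →
        ∀ V : Set X, IsUpperSet V → V ∈ F) ↔
      ((∀ x : X,
          {i : Fin n | x ∈ U i} ⊂ ⋂ y ∈ {y : X | x ⋖ y}, {i : Fin n | y ∈ U i}) ∧
        (∀ x y : X, {z : X | x ⋖ z} = {z : X | y ⋖ z} →
          {i : Fin n | x ∈ U i} = {i : Fin n | y ∈ U i} → x = y)) := by
  open GenerateImplicative in
  constructor
  · intro hF
    have hgen : ∀ V, IsUpperSet V → GenerateImplicative U V :=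
      hF {V | GenerateImplicative U V} .basic .univ (fun _ hV _ hW => hV.inter hW)
        (fun _ hV _ hW => hV.himp hW)
    exact ⟨fun x => (coloring_ssubset_iff hU x).2 (exists_forall_covBy_mem_notMem hU hgen x),
      fun _ _ => eq_of_covBy_eq_of_coloring_eq hgen⟩
  · rintro ⟨h1, h2⟩ F hFU hFuniv hFinter hFhimp V hV
    have hgen := of_isUpperSet hU (fun x => (coloring_ssubset_iff hU x).1 (h1 x)) h2 hV
    exact hgen.mem_of_closed hFU hFuniv hFinter hFhimp
end

section
/- Let A be an implicative semilattice with a nucleus j, and suppose A is generated by a single element g, i.e. the smallest subset of A containing g and ⊤ and closed under ⊓, ⇨, and j is all of A. Then every element of A is equal to one of the following eight elements: g, j g, j g ⇨ g, j (j g ⇨ g), (j g ⇨ g) ⇨ g, ((j g ⇨ g) ⇨ g) ⇨ j g, (((j g ⇨ g) ⇨ g) ⇨ j g) ⇨ j (j g ⇨ g), and ⊤. In particular A has at most 8 elements. (The free cyclic nuclear implicative semilattice has exactly these 8 elements.) -/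
/-!
Put `c = j g ⇨ g`, `e = c ⇨ g`, `f = e ⇨ j g` and `t = f ⇨ j c`. The eight elements are the
finite meets of these four meet-irreducibles: the remaining ones are `g = c ⊓ e`,
`j g = e ⊓ f`, `j c = f ⊓ t` and `⊤`. These finite meets form a subalgebra containing `g`, hence
all of `A`. They are closed under `j`, which preserves meets, fixes `e, f, t` and sends `c` to
`f ⊓ t`. They are closed under `⇨`, which distributes over `⊓` in its second argument and
curries it in its first, because `m' ⇨ m` is `m` or `⊤` for any two `m', m` among `c, e, f, t`:
writing `m = p ⇨ q` as above, either `m' ≤ m` or `p ≤ m'`, and then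
`m' ⇨ (p ⇨ q) = (m' ⊓ p) ⇨ q = p ⇨ q`.
-/

class IsImplicativeSemilattice (A : Type*) [SemilatticeInf A] [OrderTop A] [HImp A] : Prop where
  le_himp_iff (a b c : A) : a ≤ b ⇨ c ↔ a ⊓ b ≤ c

inductive InfSpan {A : Type*} [SemilatticeInf A] [OrderTop A] (I : Set A) : A → Prop
  | top : InfSpan I ⊤
  | inf_mem {m x : A} : m ∈ I → InfSpan I x → InfSpan I (m ⊓ x)

namespace InfSpan

variable {A : Type*} [SemilatticeInf A] [OrderTop A] {I : Set A} {m x y : A}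

theorem of_mem (hm : m ∈ I) : InfSpan I m := inf_top_eq m ▸ inf_mem hm top

theorem inf (hx : InfSpan I x) (hy : InfSpan I y) : InfSpan I (x ⊓ y) := by
  induction hx with
  | top => rwa [top_inf_eq]
  | inf_mem hm _ ih => rw [inf_assoc]; exact inf_mem hm ih

theorem map_nucleus (j : Nucleus A) (hI : ∀ m ∈ I, InfSpan I (j m)) (hx : InfSpan I x) :
    InfSpan I (j x) := by
  induction hx with
  | top => rw [map_top]; exact top
  | inf_mem hm _ ih => rw [j.map_inf]; exact (hI _ hm).inf ih

end InfSpan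

namespace IsImplicativeSemilattice

variable {A : Type*} [SemilatticeInf A] [OrderTop A] [HImp A] [IsImplicativeSemilattice A]
  {I : Set A} {x y z : A}

theorem himp_inf_le : (x ⇨ y) ⊓ x ≤ y := (le_himp_iff _ _ _).1 le_rfl

theorem inf_himp_le : x ⊓ (x ⇨ y) ≤ y := inf_comm x _ ▸ himp_inf_le

theorem le_himp : y ≤ x ⇨ y := (le_himp_iff _ _ _).2 inf_le_left

theorem himp_eq_top_of_le (h : x ≤ y) : x ⇨ y = ⊤ :=
  top_unique <| (le_himp_iff _ _ _).2 (inf_le_right.trans h)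

theorem top_himp : ⊤ ⇨ y = y :=
  le_antisymm (by simpa using himp_inf_le (x := ⊤) (y := y)) le_himp

theorem himp_inf_distrib : x ⇨ (y ⊓ z) = (x ⇨ y) ⊓ (x ⇨ z) :=
  eq_of_forall_le_iff fun a => by simp only [le_inf_iff, le_himp_iff]

theorem himp_himp : x ⇨ (y ⇨ z) = (x ⊓ y) ⇨ z :=
  eq_of_forall_le_iff fun a => by simp only [le_himp_iff, inf_assoc]

theorem himp_himp_of_le (h : y ≤ x) : x ⇨ (y ⇨ z) = y ⇨ z := by
  rw [himp_himp, inf_eq_right.2 h]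

theorem _root_.Nucleus.map_himp_of_inf_le (j : Nucleus A) (h : x ⊓ j y ≤ y) :
    j (x ⇨ y) = x ⇨ y := by
  refine le_antisymm ((le_himp_iff _ _ _).2 (le_trans (le_inf inf_le_right ?_) h)) j.le_apply
  calc j (x ⇨ y) ⊓ x ≤ j (x ⇨ y) ⊓ j x := inf_le_inf_left _ j.le_apply
    _ = j ((x ⇨ y) ⊓ x) := j.map_inf.symm
    _ ≤ j y := j.monotone himp_inf_le

theorem _root_.InfSpan.himp_right (hI : ∀ m ∈ I, InfSpan I (z ⇨ m)) (hy : InfSpan I y) :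
    InfSpan I (z ⇨ y) := by
  induction hy with
  | top => rw [himp_eq_top_of_le le_top]; exact .top
  | inf_mem hm _ ih => rw [himp_inf_distrib]; exact (hI _ hm).inf ih

theorem _root_.InfSpan.himp (hI : ∀ m' ∈ I, ∀ m ∈ I, InfSpan I (m' ⇨ m)) (hx : InfSpan I x)
    (hy : InfSpan I y) : InfSpan I (x ⇨ y) := by
  induction hx generalizing y with
  | top => rwa [top_himp]
  | inf_mem hm _ ih => rw [← himp_himp]; exact (ih hy).himp_right fun m hm' => hI _ hm _ hm'

end IsImplicativeSemilattice

namespace CyclicNucleus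

open IsImplicativeSemilattice

variable {A : Type*} [SemilatticeInf A] [OrderTop A] [HImp A] (j : Nucleus A) (g : A)

def c : A := j g ⇨ g

def e : A := c j g ⇨ g

def f : A := e j g ⇨ j g

def t : A := f j g ⇨ j (c j g)

def irreducibles : Set A := {c j g, e j g, f j g, t j g}

def eight : Set A := {g, j g, c j g, j (c j g), e j g, f j g, t j g, ⊤}

theorem ncard_eight_le : (eight j g).ncard ≤ 8 := by
  grw [eight, Set.ncard_insert_le, Set.ncard_insert_le, Set.ncard_insert_le, Set.ncard_insert_le,
    Set.ncard_insert_le, Set.ncard_insert_le, Set.ncard_insert_le, Set.ncard_singleton]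

variable [IsImplicativeSemilattice A]

theorem g_le_c : g ≤ c j g := le_himp

theorem c_inf_j : c j g ⊓ j g = g :=
  le_antisymm himp_inf_le (le_inf (g_le_c j g) j.le_apply)

theorem c_inf_e : c j g ⊓ e j g = g :=
  le_antisymm inf_himp_le (le_inf (g_le_c j g) le_himp)

theorem j_le_e : j g ≤ e j g := (le_himp_iff _ _ _).2 ((inf_comm _ _).trans (c_inf_j j g)).le

theorem j_le_f : j g ≤ f j g := le_himp

theorem e_inf_jc : e j g ⊓ j (c j g) = j g := by
  refine le_antisymm ?_ (le_inf (j_le_e j g) (j.monotone (g_le_c j g)))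
  calc e j g ⊓ j (c j g) ≤ j (e j g) ⊓ j (c j g) := inf_le_inf_right _ j.le_apply
    _ = j g := by rw [← j.map_inf, inf_comm, c_inf_e]

theorem jc_le_f : j (c j g) ≤ f j g :=
  (le_himp_iff _ _ _).2 ((inf_comm _ _).trans (e_inf_jc j g)).le

theorem jc_le_t : j (c j g) ≤ t j g := le_himp

theorem e_inf_f : e j g ⊓ f j g = j g :=
  le_antisymm inf_himp_le (le_inf (j_le_e j g) (j_le_f j g))

theorem f_inf_t : f j g ⊓ t j g = j (c j g) :=
  le_antisymm inf_himp_le (le_inf (jc_le_f j g) (jc_le_t j g))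

theorem e_le_t : e j g ≤ t j g :=
  (le_himp_iff _ _ _).2 ((e_inf_f j g).le.trans (j.monotone (g_le_c j g)))

theorem map_e : j (e j g) = e j g := j.map_himp_of_inf_le (c_inf_j j g).le

theorem map_f : j (f j g) = f j g := j.map_himp_of_inf_le (by rw [j.idempotent]; exact inf_le_right)

theorem map_t : j (t j g) = t j g := j.map_himp_of_inf_le (by rw [j.idempotent]; exact inf_le_right)

theorem himp_eq_or_le {m' m : A} (hm' : m' ∈ irreducibles j g) (hm : m ∈ irreducibles j g) :
    m' ⇨ m = m ∨ m' ≤ m := by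
  have := j.le_apply (x := c j g)
  have := j_le_e j g
  have := j_le_f j g
  have := jc_le_f j g
  have := jc_le_t j g
  have := e_le_t j g
  simp only [irreducibles, Set.mem_insert_iff, Set.mem_singleton_iff] at hm' hm
  rcases hm' with h' | h' | h' | h' <;> rcases hm with h | h | h | h <;> rw [h', h] <;>
    first
    | (right; order)
    | (left; exact himp_himp_of_le (by order))

theorem infSpan_himp {m' m : A} (hm' : m' ∈ irreducibles j g) (hm : m ∈ irreducibles j g) :
    InfSpan (irreducibles j g) (m' ⇨ m) := by
  rcases himp_eq_or_le j g hm' hm with h | h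
  · rw [h]; exact .of_mem hm
  · rw [himp_eq_top_of_le h]; exact .top

theorem infSpan_map {m : A} (hm : m ∈ irreducibles j g) : InfSpan (irreducibles j g) (j m) := by
  simp only [irreducibles, Set.mem_insert_iff, Set.mem_singleton_iff] at hm
  rcases hm with rfl | rfl | rfl | rfl
  · rw [← f_inf_t]
    exact .inf (.of_mem (by simp [irreducibles])) (.of_mem (by simp [irreducibles]))
  · rw [map_e]; exact .of_mem (by simp [irreducibles])
  · rw [map_f]; exact .of_mem (by simp [irreducibles])
  · rw [map_t]; exact .of_mem (by simp [irreducibles])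

theorem infSpan_generator : InfSpan (irreducibles j g) g := by
  have h : InfSpan (irreducibles j g) (c j g ⊓ e j g) :=
    .inf (.of_mem (by simp [irreducibles])) (.of_mem (by simp [irreducibles]))
  rwa [c_inf_e] at h

theorem inf_mem_eight {m x : A} (hm : m ∈ irreducibles j g) (hx : x ∈ eight j g) :
    m ⊓ x ∈ eight j g := by
  have := j.le_apply (x := g)
  have := j.le_apply (x := c j g)
  have := j.monotone (g_le_c j g)
  have := g_le_c j g
  have := j_le_e j g
  have := jc_le_f j g
  have := jc_le_t j g
  have := e_le_t j g
  have e_inf_c : e j g ⊓ c j g = g := (inf_comm _ _).trans (c_inf_e j g)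
  have f_inf_e : f j g ⊓ e j g = j g := (inf_comm _ _).trans (e_inf_f j g)
  have t_inf_f : t j g ⊓ f j g = j (c j g) := (inf_comm _ _).trans (f_inf_t j g)
  simp only [irreducibles, Set.mem_insert_iff, Set.mem_singleton_iff] at hm
  simp only [eight, Set.mem_insert_iff, Set.mem_singleton_iff] at hx ⊢
  rcases hm with hm | hm | hm | hm <;> rcases hx with h | h | h | h | h | h | h | h <;>
    rw [hm, h] <;>
    simp (disch := first | order | fail) only [inf_of_le_left, inf_of_le_right, c_inf_j,
      c_inf_e, e_inf_c, e_inf_jc, e_inf_f, f_inf_e, f_inf_t, t_inf_f, true_or, or_true]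

theorem mem_eight_of_infSpan {a : A} (ha : InfSpan (irreducibles j g) a) : a ∈ eight j g := by
  induction ha with
  | top => simp [eight]
  | inf_mem hm _ ih => exact inf_mem_eight j g hm ih

end CyclicNucleus

/-- The free cyclic nuclear implicative semilattice has 8 elements: if an implicative
semilattice with nucleus `j` is generated by a single element `g`, then every element is
one of the listed eight elements; in particular the algebra has at most 8 elements. -/
theorem free_cyclic_nis_has_eight_elements {A : Type*} [SemilatticeInf A] [OrderTop A]
    (himp : A → A → A) (hres : ∀ a b c : A, a ≤ himp b c ↔ a ⊓ b ≤ c)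
    (j : A → A) (hj_le : ∀ a : A, a ≤ j a) (hj_idem : ∀ a : A, j (j a) = j a)
    (hj_inf : ∀ a b : A, j (a ⊓ b) = j a ⊓ j b)
    (g : A)
    (hgen : ∀ T : Set A, g ∈ T → (⊤ : A) ∈ T →
      (∀ x ∈ T, ∀ y ∈ T, x ⊓ y ∈ T) → (∀ x ∈ T, ∀ y ∈ T, himp x y ∈ T) →
      (∀ x ∈ T, j x ∈ T) → ∀ a : A, a ∈ T) :
    (∀ a : A,
      a = g ∨
      a = j g ∨
      a = himp (j g) g ∨
      a = j (himp (j g) g) ∨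
      a = himp (himp (j g) g) g ∨
      a = himp (himp (himp (j g) g) g) (j g) ∨
      a = himp (himp (himp (himp (j g) g) g) (j g)) (j (himp (j g) g)) ∨
      a = ⊤) ∧
    Nat.card A ≤ 8 := by
  let _ : HImp A := ⟨himp⟩
  have : IsImplicativeSemilattice A := ⟨hres⟩
  let n : Nucleus A := ⟨⟨j, hj_inf⟩, fun a => (hj_idem a).le, hj_le⟩
  have hspan (a : A) : InfSpan (CyclicNucleus.irreducibles n g) a :=
    hgen {x | InfSpan (CyclicNucleus.irreducibles n g) x}
      (CyclicNucleus.infSpan_generator n g) .top (fun _ hx _ hy => hx.inf hy)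
      (fun _ hx _ hy => hx.himp (fun _ hm' _ hm => CyclicNucleus.infSpan_himp n g hm' hm) hy)
      (fun _ hx => hx.map_nucleus n fun _ hm => CyclicNucleus.infSpan_map n g hm) a
  have hmem (a : A) : a ∈ CyclicNucleus.eight n g :=
    CyclicNucleus.mem_eight_of_infSpan n g (hspan a)
  refine ⟨hmem, ?_⟩
  rw [← Set.ncard_univ, ← Set.eq_univ_of_forall hmem]
  exact CyclicNucleus.ncard_eight_le n g
end
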